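/- arXiv:2306.08065 — 5 statements merged into one kernel-verified Lean document; each statement's English description precedes it below -/
import Mathlib

section
/- For every integer n ≥ 0 and every set B ⊆ [n], the number of permutations in Av_n(213) with descent bottom set B, the number of permutations in Av_n(231) with descent bottom set B, and the number of permutations in Av_n(312) with descent bottom set B are all equal. (Equivalently, the patterns 213, 231, 312 are Desbot-Wilf equivalent.) -/
/-!
Decomposed at its first letter, a 231-avoiding permutation is a word `a :: (A ++ C)` with
`A < a < C` and `A`, `C` 231-avoiding, and a 213-avoiding one is a word `a :: (C ++ A)` of the
same kind. In both shapes the descent bottoms are those of `A` and `C` together with the first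
letter of `A`, so exchanging the two blocks recursively (`rootFlip`) is a bijection preserving
`Desbot`.

Decomposed at its minimum `m`, a 312-avoider is a word `L ++ m :: R` with `L < R` and a
213-avoider one with `L > R`. Now the descent bottoms are those of `L` and `R`, together with `m`
when `L` is nonempty, so exchanging `L` and `R` recursively, except when one of them is empty
(`minFlip`), is again a bijection preserving `Desbot`.
-/

open scoped Classical

/-- The 1-based `i`-th entry of a permutation `σ` of `{1,…,n}`, as a value in `{1,…,n}`
(one-line notation `σ(1)…σ(n)`). -/
def entry {n : ℕ} (σ : Equiv.Perm (Fin n)) (i : ℕ) : ℕ :=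
  if h : i - 1 < n then (σ ⟨i - 1, h⟩ : ℕ) + 1 else 0

/-- `σ` contains the pattern `π ∈ S_k` (given in 0-based one-line notation as a function):
there is a (not necessarily consecutive) subsequence of `σ` order-isomorphic to `π`. -/
def Contains {n k : ℕ} (π : Fin k → Fin k) (σ : Equiv.Perm (Fin n)) : Prop :=
  ∃ f : Fin k → Fin n, StrictMono f ∧ ∀ i j : Fin k, π i < π j ↔ σ (f i) < σ (f j)

/-- `σ` avoids the pattern `π`. -/
def AvoidsPat {n k : ℕ} (π : Fin k → Fin k) (σ : Equiv.Perm (Fin n)) : Prop :=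
  ¬ Contains π σ

/-- The descent set of `σ` (1-based positions `i ∈ [n-1]` with `σ(i) > σ(i+1)`). -/
def Des {n : ℕ} (σ : Equiv.Perm (Fin n)) : Finset ℕ :=
  (Finset.Icc 1 (n - 1)).filter (fun i => entry σ (i + 1) < entry σ i)

/-- The descent top set of `σ`: `{σ(i) : i ∈ Des σ}`. -/
def Destop {n : ℕ} (σ : Equiv.Perm (Fin n)) : Finset ℕ :=
  (Des σ).image (entry σ)

/-- The descent bottom set of `σ`: `{σ(i+1) : i ∈ Des σ}`. -/
def Desbot {n : ℕ} (σ : Equiv.Perm (Fin n)) : Finset ℕ :=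
  (Des σ).image (fun i => entry σ (i + 1))

/-- The ascent set of `σ` (1-based positions `i ∈ [n-1]` with `σ(i) < σ(i+1)`). -/
def Asc {n : ℕ} (σ : Equiv.Perm (Fin n)) : Finset ℕ :=
  (Finset.Icc 1 (n - 1)).filter (fun i => entry σ i < entry σ (i + 1))

/-- The ascent top set of `σ`: `{σ(i+1) : i ∈ Asc σ}`. -/
def Asctop {n : ℕ} (σ : Equiv.Perm (Fin n)) : Finset ℕ :=
  (Asc σ).image (fun i => entry σ (i + 1))

/-- The ascent bottom set of `σ`: `{σ(i) : i ∈ Asc σ}`. -/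
def Ascbot {n : ℕ} (σ : Equiv.Perm (Fin n)) : Finset ℕ :=
  (Asc σ).image (entry σ)

/-- The set of peak values of `σ`. -/
def Peak {n : ℕ} (σ : Equiv.Perm (Fin n)) : Finset ℕ :=
  Destop σ ∩ Asctop σ

/-- The set of valley values of `σ`. -/
def Val {n : ℕ} (σ : Equiv.Perm (Fin n)) : Finset ℕ :=
  Desbot σ ∩ Ascbot σ

/-- The set of left-to-right maxima (as values) of `σ`. -/
noncomputable def LRmax {n : ℕ} (σ : Equiv.Perm (Fin n)) : Finset ℕ :=
  ((Finset.Icc 1 n).filter (fun i => ∀ j, 1 ≤ j → j < i → entry σ j < entry σ i)).image (entry σ)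

/-- The set of left-to-right minima (as values) of `σ`. -/
noncomputable def LRmin {n : ℕ} (σ : Equiv.Perm (Fin n)) : Finset ℕ :=
  ((Finset.Icc 1 n).filter (fun i => ∀ j, 1 ≤ j → j < i → entry σ i < entry σ j)).image (entry σ)

/-- The set of right-to-left maxima (as values) of `σ`. -/
noncomputable def RLmax {n : ℕ} (σ : Equiv.Perm (Fin n)) : Finset ℕ :=
  ((Finset.Icc 1 n).filter (fun i => ∀ j, i < j → j ≤ n → entry σ j < entry σ i)).image (entry σ)

/-- The set of right-to-left minima (as values) of `σ`. -/
noncomputable def RLmin {n : ℕ} (σ : Equiv.Perm (Fin n)) : Finset ℕ :=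
  ((Finset.Icc 1 n).filter (fun i => ∀ j, i < j → j ≤ n → entry σ i < entry σ j)).image (entry σ)

/-- `(T, B)` is a descent matching: `T` and `B` are finite sets of positive integers
with `|T| = |B| = k`, and writing `T = {t_1 < … < t_k}`, `B = {b_1 < … < b_k}`,
we have `t_i > b_i` for all `i ∈ [k]`. -/
def DescentMatching (T B : Finset ℕ) : Prop :=
  T.card = B.card ∧ (∀ t ∈ T, 0 < t) ∧ (∀ b ∈ B, 0 < b) ∧
    ∀ i < T.card, (B.sort (· ≤ ·)).getD i 0 < (T.sort (· ≤ ·)).getD i 0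

/-- `(2_v 31)σ`: the number of occurrences of the vincular pattern `2-31` in `σ`
in which the "2" has value `v`. -/
def occ2_31at {n : ℕ} (σ : Equiv.Perm (Fin n)) (v : ℕ) : ℕ :=
  ((Finset.Icc 1 (n - 1) ×ˢ Finset.Icc 1 (n - 1)).filter
    (fun p => p.1 < p.2 ∧ entry σ (p.2 + 1) < entry σ p.2 ∧
      entry σ (p.2 + 1) < entry σ p.1 ∧ entry σ p.1 = v ∧ v < entry σ p.2)).card

/-- `(31 2_v)σ`: the number of occurrences of the vincular pattern `31-2` in `σ`
in which the "2" has value `v`. -/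
def occ31_2at {n : ℕ} (σ : Equiv.Perm (Fin n)) (v : ℕ) : ℕ :=
  ((Finset.Icc 1 (n - 1) ×ˢ Finset.Icc 1 n).filter
    (fun p => p.1 + 1 < p.2 ∧ entry σ (p.1 + 1) < entry σ p.1 ∧
      entry σ (p.1 + 1) < entry σ p.2 ∧ entry σ p.2 = v ∧ v < entry σ p.1)).card

/-- `(2-31)σ`: the number of occurrences of the vincular pattern `2-31` in `σ`. -/
def occ2_31 {n : ℕ} (σ : Equiv.Perm (Fin n)) : ℕ :=
  ((Finset.Icc 1 (n - 1) ×ˢ Finset.Icc 1 (n - 1)).filter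
    (fun p => p.1 < p.2 ∧ entry σ (p.2 + 1) < entry σ p.2 ∧
      entry σ (p.2 + 1) < entry σ p.1 ∧ entry σ p.1 < entry σ p.2)).card

/-- `(31-2)σ`: the number of occurrences of the vincular pattern `31-2` in `σ`. -/
def occ31_2 {n : ℕ} (σ : Equiv.Perm (Fin n)) : ℕ :=
  ((Finset.Icc 1 (n - 1) ×ˢ Finset.Icc 1 n).filter
    (fun p => p.1 + 1 < p.2 ∧ entry σ (p.1 + 1) < entry σ p.1 ∧
      entry σ (p.1 + 1) < entry σ p.2 ∧ entry σ p.2 < entry σ p.1)).card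

/-- The signature function `sg_{(T,B)}(i) = |B_{<i}| - |T_{≤i}| + 1`. -/
def sg (T B : Finset ℕ) (i : ℕ) : ℕ :=
  (B.filter (fun b => b < i)).card - (T.filter (fun t => t ≤ i)).card + 1

/-- The `(p,q)`-integer `[m]_{p,q} = Σ_{a+b=m-1} p^a q^b`. -/
def genQInt {R : Type*} [CommRing R] (m : ℕ) (p q : R) : R :=
  ∑ a ∈ Finset.range m, p ^ a * q ^ (m - 1 - a)

/-- The reverse complement of `σ`: `σ^{rc}(i) = n + 1 - σ(n + 1 - i)`. -/
def revComp {n : ℕ} (σ : Equiv.Perm (Fin n)) : Equiv.Perm (Fin n) :=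
  (Fin.revPerm.trans σ).trans Fin.revPerm

namespace DesbotWilf

open List

section DescentBottoms

variable {α : Type*} [LinearOrder α]

def descentBottoms : List α → Finset α
  | a :: b :: t => (if b < a then {b} else ∅) ∪ descentBottoms (b :: t)
  | _ => ∅

@[simp] theorem descentBottoms_nil : descentBottoms ([] : List α) = ∅ := rfl

@[simp] theorem descentBottoms_singleton (a : α) : descentBottoms [a] = ∅ := rfl

theorem descentBottoms_cons_cons (a b : α) (t : List α) :
    descentBottoms (a :: b :: t) = (if b < a then {b} else ∅) ∪ descentBottoms (b :: t) := rfl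

theorem descentBottoms_append_cons (u : List α) (b : α) (v : List α) :
    descentBottoms (u ++ b :: v) =
      descentBottoms u ∪ (if ∃ a ∈ u.getLast?, b < a then {b} else ∅) ∪
        descentBottoms (b :: v) := by
  induction u with
  | nil => simp
  | cons x u ih =>
    cases u with
    | nil => simp [descentBottoms_cons_cons]
    | cons y u =>
      rw [cons_append, cons_append, descentBottoms_cons_cons, ← cons_append, ih,
        descentBottoms_cons_cons, getLast?_cons_cons, Finset.union_assoc, Finset.union_assoc,
        Finset.union_assoc]

theorem descentBottoms_cons_of_forall_lt {a : α} {l : List α} (h : ∀ x ∈ l, a < x) :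
    descentBottoms (a :: l) = descentBottoms l := by
  cases l with
  | nil => rfl
  | cons b t => simp [descentBottoms_cons_cons, (h b mem_cons_self).not_gt]

theorem descentBottoms_cons_of_forall_gt {a : α} {l : List α} (h : ∀ x ∈ l, x < a) :
    descentBottoms (a :: l) = l.head?.toFinset ∪ descentBottoms l := by
  cases l with
  | nil => rfl
  | cons b t => simp [descentBottoms_cons_cons, h b mem_cons_self]

theorem descentBottoms_cons_low_high {a : α} {A C : List α} (hA : ∀ x ∈ A, x < a)
    (hC : ∀ x ∈ C, a < x) :
    descentBottoms (a :: (A ++ C)) = A.head?.toFinset ∪ (descentBottoms A ∪ descentBottoms C) := by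
  cases C with
  | nil => simp [descentBottoms_cons_of_forall_gt hA]
  | cons c C =>
    have hlast : ¬ ∃ x ∈ (a :: A).getLast?, c < x := by
      rintro ⟨x, hx, hcx⟩
      rcases mem_cons.mp (mem_of_getLast? hx) with rfl | hx
      · exact (hC c mem_cons_self).not_gt hcx
      · exact (hA x hx).not_gt ((hC c mem_cons_self).trans hcx)
    rw [← cons_append, descentBottoms_append_cons, if_neg hlast,
      descentBottoms_cons_of_forall_gt hA]
    simp [Finset.union_assoc]

theorem descentBottoms_cons_high_low {a : α} {A C : List α} (hA : ∀ x ∈ A, x < a)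
    (hC : ∀ x ∈ C, a < x) :
    descentBottoms (a :: (C ++ A)) = A.head?.toFinset ∪ (descentBottoms A ∪ descentBottoms C) := by
  cases A with
  | nil => simp [descentBottoms_cons_of_forall_lt hC]
  | cons b A =>
    have hlast : ∃ x ∈ (a :: C).getLast?, b < x := by
      refine ⟨_, getLast?_eq_some_getLast (cons_ne_nil a C), ?_⟩
      rcases mem_cons.mp (getLast_mem (cons_ne_nil a C)) with h | h
      · rw [h]; exact hA b mem_cons_self
      · exact (hA b mem_cons_self).trans (hC _ h)
    rw [← cons_append, descentBottoms_append_cons, if_pos hlast,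
      descentBottoms_cons_of_forall_lt hC]
    ext; simp; tauto

theorem descentBottoms_append_min_cons {m : α} {L R : List α} (hL : ∀ x ∈ L, m < x)
    (hR : ∀ x ∈ R, m < x) :
    descentBottoms (L ++ m :: R) =
      (if L = [] then ∅ else {m}) ∪ (descentBottoms L ∪ descentBottoms R) := by
  have hlast : (∃ x ∈ L.getLast?, m < x) ↔ L ≠ [] := by
    refine ⟨fun ⟨x, hx, _⟩ hL => by simp [hL] at hx, fun hne => ?_⟩
    exact ⟨_, getLast?_eq_some_getLast hne, hL _ (getLast_mem hne)⟩
  rw [descentBottoms_append_cons, descentBottoms_cons_of_forall_lt hR]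
  by_cases h : L = []
  · simp [h]
  · rw [if_pos (hlast.mpr h), if_neg h]
    ext; simp

theorem mem_descentBottoms {x : α} : ∀ {l : List α},
    x ∈ descentBottoms l ↔ ∃ i a, l[i]? = some a ∧ l[i + 1]? = some x ∧ x < a
  | [] => by simp
  | [a] => by simp
  | a :: b :: t => by
    rw [descentBottoms_cons_cons, Finset.mem_union, mem_descentBottoms]
    constructor
    · rintro (h | ⟨i, c, hi, hi1, hx⟩)
      · split_ifs at h with hba
        · obtain rfl := Finset.mem_singleton.mp h
          exact ⟨0, a, rfl, rfl, hba⟩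
        · simp at h
      · exact ⟨i + 1, c, by simpa using hi, by simpa using hi1, hx⟩
    · rintro ⟨_ | i, c, hi, hi1, hx⟩
      · simp only [getElem?_cons_zero, zero_add, getElem?_cons_succ, Option.some.injEq] at hi hi1
        subst hi hi1
        simp [hx]
      · exact Or.inr ⟨i, c, by simpa using hi, by simpa using hi1, hx⟩

end DescentBottoms

section Avoidance

variable {α : Type*}

def Avoids (p : α → α → α → Prop) (l : List α) : Prop :=
  ∀ x y z, [x, y, z] <+ l → ¬ p x y z

variable {p : α → α → α → Prop}

theorem avoids_nil : Avoids p [] :=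
  fun _ _ _ h => by simpa using h.length_le

theorem Avoids.sublist {l l' : List α} (h : Avoids p l) (hs : l' <+ l) : Avoids p l' :=
  fun x y z hxyz => h x y z (hxyz.trans hs)

theorem Avoids.cons {a : α} {l : List α} (h : Avoids p l) (ha : ∀ y ∈ l, ∀ z ∈ l, ¬ p a y z) :
    Avoids p (a :: l) := by
  intro x y z hs
  rcases sublist_cons_iff.mp hs with hs | ⟨r, hr, hs⟩
  · exact h x y z hs
  · obtain ⟨rfl, rfl⟩ := cons_eq_cons.mp hr
    exact ha y (hs.subset (by simp)) z (hs.subset (by simp))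

theorem Avoids.append {u v : List α} (hu : Avoids p u) (hv : Avoids p v)
    (h₁ : ∀ x ∈ u, ∀ y ∈ u, ∀ z ∈ v, ¬ p x y z) (h₂ : ∀ x ∈ u, ∀ y ∈ v, ∀ z ∈ v, ¬ p x y z) :
    Avoids p (u ++ v) := by
  intro x y z hs
  obtain ⟨s, t, hst, hs, ht⟩ := sublist_append_iff.mp hs
  rcases s with _ | ⟨a, _ | ⟨b, _ | ⟨c, _ | ⟨d, s⟩⟩⟩⟩ <;> simp at hst
  · exact hv x y z (hst ▸ ht)
  · obtain ⟨rfl, rfl⟩ := hst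
    exact h₂ x (hs.subset (by simp)) y (ht.subset (by simp)) z (ht.subset (by simp))
  · obtain ⟨rfl, rfl, rfl⟩ := hst
    exact h₁ x (hs.subset (by simp)) y (hs.subset (by simp)) z (ht.subset (by simp))
  · obtain ⟨rfl, rfl, rfl, rfl⟩ := hst
    exact hu x y z hs

theorem avoids_congr {q : α → α → α → Prop} (h : ∀ x y z, p x y z ↔ q x y z) {l : List α} :
    Avoids p l ↔ Avoids q l := by
  simp only [Avoids, h]

def Matches [LT α] (π : Fin 3 → Fin 3) (x y z : α) : Prop :=
  ∀ i j, π i < π j ↔ ![x, y, z] i < ![x, y, z] j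

end Avoidance

section Patterns

variable {α : Type*} [LinearOrder α] {x y z : α}

theorem matches_102_iff : Matches ![1, 0, 2] x y z ↔ y < x ∧ x < z := by
  refine ⟨fun h => ⟨(h 1 0).mp (by decide), (h 0 2).mp (by decide)⟩, fun ⟨h1, h2⟩ i j => ?_⟩
  fin_cases i <;> fin_cases j <;> simp <;> order

theorem matches_102_iff' : Matches ![1, 0, 2] x y z ↔ y < x ∧ y < z ∧ x < z := by
  refine ⟨fun h => ⟨(h 1 0).mp (by decide), (h 1 2).mp (by decide), (h 0 2).mp (by decide)⟩,
    fun ⟨h1, _, h3⟩ i j => ?_⟩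
  fin_cases i <;> fin_cases j <;> simp <;> order

theorem matches_120_iff : Matches ![1, 2, 0] x y z ↔ x < y ∧ z < x := by
  refine ⟨fun h => ⟨(h 0 1).mp (by decide), (h 2 0).mp (by decide)⟩, fun ⟨h1, h2⟩ i j => ?_⟩
  fin_cases i <;> fin_cases j <;> simp <;> order

theorem matches_201_iff : Matches ![2, 0, 1] x y z ↔ y < x ∧ y < z ∧ z < x := by
  refine ⟨fun h => ⟨(h 1 0).mp (by decide), (h 1 2).mp (by decide), (h 2 0).mp (by decide)⟩,
    fun ⟨_, h2, h3⟩ i j => ?_⟩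
  fin_cases i <;> fin_cases j <;> simp <;> order

end Patterns

theorem eq_filter_append_filter_not_of_pairwise {α : Type*} {q : α → Bool} :
    ∀ {t : List α}, t.Pairwise (fun y z => q z → q y) → t = t.filter q ++ t.filter (!q ·)
  | [], _ => rfl
  | b :: t, h => by
    obtain ⟨hb, ht⟩ := pairwise_cons.mp h
    by_cases hqb : q b
    · rw [filter_cons_of_pos hqb, filter_cons_of_neg (by simpa using hqb), cons_append,
        ← eq_filter_append_filter_not_of_pairwise ht]
    · have hq : ∀ z ∈ t, q z = false := fun z hz => by simpa using mt (hb z hz) hqb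
      rw [filter_cons_of_neg hqb, filter_cons_of_pos (by simpa using hqb),
        filter_eq_nil_iff.mpr (by simpa using hq), filter_eq_self.mpr (by simpa using hq),
        nil_append]

section RootSplit

variable {α : Type*} {r : α → α → Prop}

/-- `RootSplit (· < ·)` and `RootSplit (· > ·)` are the 231- and the 213-avoiders
(`avoids_iff_rootSplit`). -/
inductive RootSplit (r : α → α → Prop) : List α → Prop
  | nil : RootSplit r []
  | cons {a : α} {A C : List α} : (∀ x ∈ A, r x a) → (∀ x ∈ C, r a x) →
      RootSplit r A → RootSplit r C → RootSplit r (a :: (A ++ C))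

noncomputable def rootFlip (r : α → α → Prop) : List α → List α
  | [] => []
  | a :: t => a :: (rootFlip r (t.filter (r a ·)) ++ rootFlip r (t.filter (r · a)))
termination_by l => l.length
decreasing_by
  all_goals
    simp only [length_cons, Nat.lt_succ_iff, length_unattach]
    exact (length_filter_le _ _).trans length_attach.le

theorem rootFlip_cons_append [Std.Asymm r] {a : α} {A C : List α} (hA : ∀ x ∈ A, r x a)
    (hC : ∀ x ∈ C, r a x) : rootFlip r (a :: (A ++ C)) = a :: (rootFlip r C ++ rootFlip r A) := by
  have hhigh : (A ++ C).filter (r a ·) = C := by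
    rw [filter_append, filter_eq_nil_iff.mpr, filter_eq_self.mpr, nil_append]
    · exact fun x hx => by simpa using hC x hx
    · exact fun x hx => by simpa using Std.Asymm.asymm _ _ (hA x hx)
  have hlow : (A ++ C).filter (r · a) = A := by
    rw [filter_append, filter_eq_self.mpr, filter_eq_nil_iff.mpr, append_nil]
    · exact fun x hx => by simpa using Std.Asymm.asymm _ _ (hC x hx)
    · exact fun x hx => by simpa using hA x hx
  rw [rootFlip, hhigh, hlow]

variable [Std.Asymm r]

theorem RootSplit.rootFlip_perm {l : List α} (h : RootSplit r l) : rootFlip r l ~ l := by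
  induction h with
  | nil => simp [rootFlip]
  | cons hA hC _ _ ihA ihC =>
    rw [rootFlip_cons_append hA hC]
    exact ((ihC.append ihA).trans perm_append_comm).cons _

theorem RootSplit.rootSplit_rootFlip {l : List α} (h : RootSplit r l) :
    RootSplit (Function.swap r) (rootFlip r l) := by
  induction h with
  | nil => simpa [rootFlip] using RootSplit.nil
  | cons hA hC sA sC ihA ihC =>
    rw [rootFlip_cons_append hA hC]
    exact .cons (fun x hx => hC x (sC.rootFlip_perm.subset hx))
      (fun x hx => hA x (sA.rootFlip_perm.subset hx)) ihC ihA

theorem RootSplit.rootFlip_rootFlip {l : List α} (h : RootSplit r l) :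
    rootFlip (Function.swap r) (rootFlip r l) = l := by
  induction h with
  | nil => simp [rootFlip]
  | cons hA hC sA sC ihA ihC =>
    rw [rootFlip_cons_append hA hC, rootFlip_cons_append
      (fun x hx => hC x (sC.rootFlip_perm.subset hx))
      (fun x hx => hA x (sA.rootFlip_perm.subset hx)), ihA, ihC]

theorem RootSplit.descentBottoms_rootFlip [LinearOrder α] {l : List α}
    (h : RootSplit (· < ·) l) : descentBottoms (rootFlip (· < ·) l) = descentBottoms l := by
  induction h with
  | nil => simp [rootFlip]
  | @cons a A C hA hC sA sC ihA ihC =>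
    have hhead : (rootFlip (· < ·) A).head? = A.head? := by
      cases A <;> simp [rootFlip]
    rw [rootFlip_cons_append hA hC,
      descentBottoms_cons_high_low (fun x hx => hA x (sA.rootFlip_perm.subset hx))
        (fun x hx => hC x (sC.rootFlip_perm.subset hx)),
      descentBottoms_cons_low_high hA hC, hhead, ihA, ihC]

theorem RootSplit.avoids [IsTrans α r] {l : List α} (h : RootSplit r l) :
    Avoids (fun x y z => r x y ∧ r z x) l := by
  induction h with
  | nil => exact avoids_nil
  | @cons a A C hA hC _ _ ihA ihC =>
    have hAC : ∀ x ∈ a :: A, ∀ z ∈ C, r x z := by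
      intro x hx z hz
      rcases mem_cons.mp hx with rfl | hx
      · exact hC z hz
      · exact _root_.trans (hA x hx) (hC z hz)
    rw [← cons_append]
    refine (ihA.cons fun y hy _ _ h => asymm h.1 (hA y hy)).append ihC ?_ ?_
    · exact fun x hx _ _ z hz h => asymm h.2 (hAC x hx z hz)
    · exact fun x hx _ _ z hz h => asymm h.2 (hAC x hx z hz)

theorem RootSplit.of_avoids [Std.Trichotomous r] :
    ∀ {l : List α}, l.Nodup → Avoids (fun x y z => r x y ∧ r z x) l → RootSplit r l
  | [], _, _ => .nil
  | a :: t, hl, h => by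
    have ha : a ∉ t := (nodup_cons.mp hl).1
    have hside : ∀ y ∈ t, r a y ↔ ¬ r y a := fun y hy =>
      ⟨fun h' => asymm h', fun h' => (trichotomous_of r y a).resolve_left h' |>.resolve_left
        (by rintro rfl; exact ha hy)⟩
    have hsplit : t = t.filter (r · a) ++ t.filter (r a ·) := by
      rw [filter_congr (p := fun y => r a y) (q := fun y => !decide (r y a))
        (fun y hy => by simp [hside y hy])]
      refine eq_filter_append_filter_not_of_pairwise
        (pairwise_iff_forall_sublist.mpr fun {y z} hyz => ?_)
      simp only [decide_eq_true_eq]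
      intro hz
      by_contra hy
      exact h a y z (hyz.cons_cons a) ⟨(hside y (hyz.subset (by simp))).mpr hy, hz⟩
    have hsub : t <+ a :: t := sublist_cons_self a t
    rw [hsplit]
    exact .cons (fun x hx => (of_decide_eq_true (mem_filter.mp hx).2))
      (fun x hx => (of_decide_eq_true (mem_filter.mp hx).2))
      (of_avoids ((hl.sublist hsub).filter _) (h.sublist ((filter_sublist).trans hsub)))
      (of_avoids ((hl.sublist hsub).filter _) (h.sublist ((filter_sublist).trans hsub)))
termination_by l => l.length
decreasing_by all_goals exact Nat.lt_succ_of_le (length_filter_le _ _)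

theorem avoids_iff_rootSplit [IsStrictTotalOrder α r] {l : List α} (hl : l.Nodup) :
    Avoids (fun x y z => r x y ∧ r z x) l ↔ RootSplit r l :=
  ⟨RootSplit.of_avoids hl, RootSplit.avoids⟩

end RootSplit

section MinSplit

variable {α : Type*} [LinearOrder α]

/-- `MinSplit (· < ·)` and `MinSplit (· > ·)` are the 312- and the 213-avoiders
(`avoids_iff_minSplit`). -/
inductive MinSplit (r : α → α → Prop) : List α → Prop
  | nil : MinSplit r []
  | cons {L R : List α} {m : α} : (∀ x ∈ L, m < x) → (∀ x ∈ R, m < x) →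
      (∀ x ∈ L, ∀ y ∈ R, r x y) → MinSplit r L → MinSplit r R → MinSplit r (L ++ m :: R)

def minFlip (l : List α) : List α :=
  if h : l = [] then [] else
    let m := l.min h
    let L := l.take (l.idxOf m)
    let R := l.drop (l.idxOf m + 1)
    if L = [] ∨ R = [] then minFlip L ++ m :: minFlip R else minFlip R ++ m :: minFlip L
termination_by l.length
decreasing_by
  all_goals
    have := idxOf_lt_length_of_mem (min_mem h)
    simp only [length_take, length_drop]
    omega

theorem minFlip_append_cons {L R : List α} {m : α} (hL : ∀ x ∈ L, m < x) (hR : ∀ x ∈ R, m < x) :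
    minFlip (L ++ m :: R) =
      if L = [] ∨ R = [] then minFlip L ++ m :: minFlip R else minFlip R ++ m :: minFlip L := by
  have hmin : (L ++ m :: R).min (by simp) = m := by
    refine (min_eq_iff _).mpr ⟨by simp, fun b hb => ?_⟩
    rcases mem_append.mp hb with hb | hb
    · exact (hL b hb).le
    · rcases mem_cons.mp hb with rfl | hb
      exacts [le_rfl, (hR b hb).le]
  have hidx : (L ++ m :: R).idxOf m = L.length := by
    rw [idxOf_append_of_notMem (fun h => (hL m h).false), idxOf_cons_self, add_zero]
  rw [minFlip, dif_neg (by simp)]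
  simp [hmin, hidx]

variable {r : α → α → Prop}

theorem MinSplit.minFlip_perm {l : List α} (h : MinSplit r l) : minFlip l ~ l := by
  induction h with
  | nil => simp [minFlip]
  | @cons L R m hL hR _ _ _ ihL ihR =>
    rw [minFlip_append_cons hL hR]
    split_ifs
    · exact ihL.append (ihR.cons m)
    · exact perm_middle.trans (((ihR.append ihL).trans perm_append_comm).cons m)
        |>.trans perm_middle.symm

theorem MinSplit.minFlip_eq_nil_iff {l : List α} (h : MinSplit r l) : minFlip l = [] ↔ l = [] := by
  rw [← length_eq_zero_iff, h.minFlip_perm.length_eq, length_eq_zero_iff]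

theorem MinSplit.minSplit_minFlip {l : List α} (h : MinSplit r l) :
    MinSplit (Function.swap r) (minFlip l) := by
  induction h with
  | nil => simpa [minFlip] using MinSplit.nil
  | @cons L R m hL hR hLR sL sR ihL ihR =>
    have hL' : ∀ x ∈ minFlip L, m < x := fun x hx => hL x (sL.minFlip_perm.subset hx)
    have hR' : ∀ x ∈ minFlip R, m < x := fun x hx => hR x (sR.minFlip_perm.subset hx)
    rw [minFlip_append_cons hL hR]
    split_ifs with hLR'
    · refine .cons hL' hR' ?_ ihL ihR
      rcases hLR' with hL0 | hR0
      · simp [(sL.minFlip_eq_nil_iff).mpr hL0]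
      · simp [(sR.minFlip_eq_nil_iff).mpr hR0]
    · exact .cons hR' hL' (fun x hx y hy =>
        hLR y (sL.minFlip_perm.subset hy) x (sR.minFlip_perm.subset hx)) ihR ihL

theorem MinSplit.minFlip_minFlip {l : List α} (h : MinSplit r l) : minFlip (minFlip l) = l := by
  induction h with
  | nil => simp [minFlip]
  | @cons L R m hL hR hLR sL sR ihL ihR =>
    have hL' : ∀ x ∈ minFlip L, m < x := fun x hx => hL x (sL.minFlip_perm.subset hx)
    have hR' : ∀ x ∈ minFlip R, m < x := fun x hx => hR x (sR.minFlip_perm.subset hx)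
    rw [minFlip_append_cons hL hR]
    split_ifs with hLR'
    · rw [minFlip_append_cons hL' hR']
      simp only [sL.minFlip_eq_nil_iff, sR.minFlip_eq_nil_iff, if_pos hLR', ihL, ihR]
    · rw [minFlip_append_cons hR' hL']
      simp only [sL.minFlip_eq_nil_iff, sR.minFlip_eq_nil_iff, or_comm, if_neg hLR', ihL, ihR]

theorem MinSplit.descentBottoms_minFlip {l : List α} (h : MinSplit r l) :
    descentBottoms (minFlip l) = descentBottoms l := by
  induction h with
  | nil => simp [minFlip]
  | @cons L R m hL hR hLR sL sR ihL ihR =>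
    have hL' : ∀ x ∈ minFlip L, m < x := fun x hx => hL x (sL.minFlip_perm.subset hx)
    have hR' : ∀ x ∈ minFlip R, m < x := fun x hx => hR x (sR.minFlip_perm.subset hx)
    rw [minFlip_append_cons hL hR, descentBottoms_append_min_cons hL hR]
    by_cases hLR' : L = [] ∨ R = []
    · rw [if_pos hLR', descentBottoms_append_min_cons hL' hR']
      simp only [sL.minFlip_eq_nil_iff, ihL, ihR]
    · obtain ⟨hL0, hR0⟩ := not_or.mp hLR'
      rw [if_neg hLR', descentBottoms_append_min_cons hR' hL',
        if_neg (mt sR.minFlip_eq_nil_iff.mp hR0), if_neg hL0, ihL, ihR,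
        Finset.union_comm (descentBottoms R)]

theorem MinSplit.avoids [Std.Asymm r] {l : List α} (h : MinSplit r l) :
    Avoids (fun x y z => y < x ∧ y < z ∧ r z x) l := by
  induction h with
  | nil => exact avoids_nil
  | @cons L R m hL hR hLR _ _ ihL ihR =>
    have hmR : ∀ y ∈ m :: R, m ≤ y := by
      simpa using fun y hy => (hR y hy).le
    have hcross : ∀ x ∈ L, ∀ z ∈ m :: R, z = m ∨ r x z := by
      simpa using fun x hx z hz => Or.inr (hLR x hx z hz)
    refine ihL.append (ihR.cons fun y hy _ _ h => (hR y hy).not_gt h.1) ?_ ?_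
    · intro x hx y hy z hz h
      rcases hcross x hx z hz with rfl | hxz
      · exact (hL y hy).not_gt h.2.1
      · exact asymm hxz h.2.2
    · intro x hx y hy z hz h
      rcases hcross x hx z hz with rfl | hxz
      · exact (hmR y hy).not_gt h.2.1
      · exact asymm hxz h.2.2

theorem MinSplit.of_avoids [Std.Trichotomous r] {l : List α} (hl : l.Nodup)
    (h : Avoids (fun x y z => y < x ∧ y < z ∧ r z x) l) : MinSplit r l := by
  rcases eq_or_ne l [] with rfl | hne
  · exact .nil
  obtain ⟨m, hmin, L, R, rfl⟩ : ∃ m, (∀ y ∈ l, m ≤ y) ∧ ∃ L R, l = L ++ m :: R :=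
    ⟨_, fun y hy => min_le_of_mem hy, mem_iff_append.mp (min_mem hne)⟩
  obtain ⟨hLn, hmRn, hdisj⟩ := nodup_append.mp hl
  obtain ⟨hmR, hRn⟩ := nodup_cons.mp hmRn
  have hL : ∀ x ∈ L, m < x := fun x hx =>
    (hmin x (by simp [hx])).lt_of_ne (hdisj x hx _ mem_cons_self).symm
  have hR : ∀ x ∈ R, m < x := fun x hx =>
    (hmin x (by simp [hx])).lt_of_ne (fun h => hmR (h ▸ hx))
  have hcross : ∀ x ∈ L, ∀ y ∈ R, r x y := fun x hx y hy =>
    ((trichotomous_of r x y).resolve_right fun hne => hne.elim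
      (fun hxy => hdisj x hx y (mem_cons_of_mem _ hy) hxy)
      fun hyx => h x _ y ((singleton_sublist.mpr hx).append
        ((singleton_sublist.mpr hy).cons_cons _)) ⟨hL x hx, hR y hy, hyx⟩)
  exact .cons hL hR hcross (of_avoids hLn (h.sublist (sublist_append_left _ _)))
    (of_avoids hRn (h.sublist ((sublist_cons_self _ _).trans (sublist_append_right _ _))))
termination_by l.length
decreasing_by all_goals (subst_vars; simp only [length_append, length_cons]; omega)

theorem avoids_iff_minSplit [IsStrictTotalOrder α r] {l : List α} (hl : l.Nodup) :
    Avoids (fun x y z => y < x ∧ y < z ∧ r z x) l ↔ MinSplit r l :=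
  ⟨MinSplit.of_avoids hl, MinSplit.avoids⟩

end MinSplit

section Counting

variable {α : Type*} [LinearOrder α]

theorem card_filter_permutations_eq {s : List α} (B : Finset α) {P Q : List α → Prop}
    (F G : List α → List α) (hF : ∀ l, P l → Q (F l)) (hG : ∀ l, Q l → P (G l))
    (hGF : ∀ l, P l → G (F l) = l) (hFG : ∀ l, Q l → F (G l) = l)
    (hF_perm : ∀ l, P l → F l ~ l) (hG_perm : ∀ l, Q l → G l ~ l)
    (hF_desc : ∀ l, P l → descentBottoms (F l) = descentBottoms l) :
    (s.permutations.toFinset.filter fun l => P l ∧ descentBottoms l = B).card =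
      (s.permutations.toFinset.filter fun l => Q l ∧ descentBottoms l = B).card := by
  refine Finset.card_nbij' F G ?_ ?_ ?_ ?_
  · intro l hl
    simp only [Finset.coe_filter, mem_toFinset, mem_permutations, Set.mem_ofPred_eq] at hl ⊢
    exact ⟨(hF_perm l hl.2.1).trans hl.1, hF l hl.2.1, (hF_desc l hl.2.1).trans hl.2.2⟩
  · intro l hl
    simp only [Finset.coe_filter, mem_toFinset, mem_permutations, Set.mem_ofPred_eq] at hl ⊢
    have hdesc := hF_desc _ (hG l hl.2.1)
    rw [hFG l hl.2.1] at hdesc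
    exact ⟨(hG_perm l hl.2.1).trans hl.1, hG l hl.2.1, hdesc.symm.trans hl.2.2⟩
  · exact fun l hl => hGF l (Finset.mem_filter.mp hl).2.1
  · exact fun l hl => hFG l (Finset.mem_filter.mp hl).2.1

theorem card_rootSplit_lt_eq_gt (s : List α) (B : Finset α) :
    (s.permutations.toFinset.filter fun l =>
        RootSplit (· < ·) l ∧ descentBottoms l = B).card =
      (s.permutations.toFinset.filter fun l =>
        RootSplit (· > ·) l ∧ descentBottoms l = B).card :=
  card_filter_permutations_eq B (rootFlip (· < ·)) (rootFlip (· > ·))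
    (fun _ h => h.rootSplit_rootFlip) (fun _ h => h.rootSplit_rootFlip)
    (fun _ h => h.rootFlip_rootFlip) (fun _ h => h.rootFlip_rootFlip)
    (fun _ h => h.rootFlip_perm) (fun _ h => h.rootFlip_perm)
    (fun _ h => h.descentBottoms_rootFlip)

theorem card_minSplit_lt_eq_gt (s : List α) (B : Finset α) :
    (s.permutations.toFinset.filter fun l =>
        MinSplit (· < ·) l ∧ descentBottoms l = B).card =
      (s.permutations.toFinset.filter fun l =>
        MinSplit (· > ·) l ∧ descentBottoms l = B).card :=
  card_filter_permutations_eq B minFlip minFlip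
    (fun _ h => h.minSplit_minFlip) (fun _ h => h.minSplit_minFlip)
    (fun _ h => h.minFlip_minFlip) (fun _ h => h.minFlip_minFlip)
    (fun _ h => h.minFlip_perm) (fun _ h => h.minFlip_perm)
    (fun _ h => h.descentBottoms_minFlip)

end Counting

section Permutations

variable {n : ℕ}

def oneLine (σ : Equiv.Perm (Fin n)) : List ℕ :=
  List.ofFn fun i => (σ i : ℕ) + 1

theorem oneLine_injective : Function.Injective (oneLine (n := n)) := fun σ τ h =>
  Equiv.ext fun i => Fin.ext (by simpa using congrFun (ofFn_injective h) i)

theorem getElem?_oneLine_eq_some (σ : Equiv.Perm (Fin n)) {j v : ℕ} :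
    (oneLine σ)[j]? = some v ↔ j < n ∧ entry σ (j + 1) = v := by
  by_cases hj : j < n <;> simp [oneLine, entry, hj]

theorem oneLine_perm_range' (σ : Equiv.Perm (Fin n)) : oneLine σ ~ range' 1 n := by
  refine (perm_ext_iff_of_nodup ?_ nodup_range').mpr fun x => ?_
  · exact nodup_ofFn.mpr fun i j h => σ.injective (Fin.ext (by simpa using h))
  · simp only [oneLine, mem_ofFn, mem_range'_1]
    constructor
    · rintro ⟨i, rfl⟩
      have := (σ i).isLt
      omega
    · rintro ⟨h1, h2⟩
      exact ⟨σ.symm ⟨x - 1, by omega⟩, by simp; omega⟩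

theorem image_oneLine :
    (Finset.univ : Finset (Equiv.Perm (Fin n))).image oneLine =
      (range' 1 n).permutations.toFinset := by
  refine Finset.eq_of_subset_of_card_le (fun l hl => ?_) ?_
  · obtain ⟨σ, -, rfl⟩ := Finset.mem_image.mp hl
    exact mem_toFinset.mpr (mem_permutations.mpr (oneLine_perm_range' σ))
  · rw [Finset.card_image_of_injective _ oneLine_injective, toFinset_card_of_nodup
      (nodup_permutations _ nodup_range'), length_permutations, length_range']
    simp [Fintype.card_perm]

theorem card_filter_oneLine (P : List ℕ → Prop) [DecidablePred P] :
    ((Finset.univ : Finset (Equiv.Perm (Fin n))).filter fun σ => P (oneLine σ)).card =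
      ((range' 1 n).permutations.toFinset.filter P).card := by
  rw [← image_oneLine, Finset.filter_image, Finset.card_image_of_injective _ oneLine_injective]

theorem desbot_eq_descentBottoms_oneLine (σ : Equiv.Perm (Fin n)) :
    Desbot σ = descentBottoms (oneLine σ) := by
  ext x
  simp only [mem_descentBottoms, getElem?_oneLine_eq_some, Desbot, Des, Finset.mem_image,
    Finset.mem_filter, Finset.mem_Icc]
  constructor
  · rintro ⟨i, ⟨⟨hi1, hin⟩, hlt⟩, rfl⟩
    exact ⟨i - 1, entry σ i, ⟨by omega, by rw [Nat.sub_add_cancel hi1]⟩,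
      ⟨by omega, by rw [Nat.sub_add_cancel hi1]⟩, hlt⟩
  · rintro ⟨j, a, ⟨-, rfl⟩, ⟨hj, rfl⟩, hlt⟩
    exact ⟨j + 1, ⟨⟨by omega, by omega⟩, hlt⟩, rfl⟩

theorem sublist_ofFn_iff {β : Type*} {g : Fin n → β} {l : List β} :
    l <+ ofFn g ↔ ∃ f : Fin l.length → Fin n, StrictMono f ∧ ∀ i, l.get i = g (f i) := by
  rw [sublist_iff_exists_fin_orderEmbedding_get_eq]
  constructor
  · rintro ⟨f, hf⟩
    exact ⟨Fin.cast length_ofFn ∘ f, fun i j hij => f.strictMono hij,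
      fun i => (hf i).trans (get_ofFn g _)⟩
  · rintro ⟨f, hf, hv⟩
    exact ⟨OrderEmbedding.ofStrictMono (Fin.cast length_ofFn.symm ∘ f)
      (fun i j hij => hf hij), fun i => by rw [hv, get_ofFn]; rfl⟩

theorem contains_iff_exists_sublist_oneLine (π : Fin 3 → Fin 3) (σ : Equiv.Perm (Fin n)) :
    Contains π σ ↔ ∃ x y z, [x, y, z] <+ oneLine σ ∧ Matches π x y z := by
  have hvec : ∀ (x y z : ℕ) (i : Fin 3), ![x, y, z] i = [x, y, z].get i := by
    intro x y z i; fin_cases i <;> rfl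
  constructor
  · rintro ⟨f, hf, hπ⟩
    have hv : ∀ i, [(σ (f 0) : ℕ) + 1, σ (f 1) + 1, σ (f 2) + 1].get i = (σ (f i) : ℕ) + 1 := by
      intro i; fin_cases i <;> rfl
    refine ⟨_, _, _, sublist_ofFn_iff.mpr ⟨f, hf, hv⟩, fun i j => ?_⟩
    rw [hπ, hvec, hvec, hv, hv]
    simp
  · rintro ⟨x, y, z, hs, hm⟩
    obtain ⟨f, hf, hv⟩ := sublist_ofFn_iff.mp hs
    refine ⟨f, hf, fun i j => ?_⟩
    rw [hm, hvec, hvec, hv, hv]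
    simp

theorem avoidsPat_iff_avoids_oneLine (π : Fin 3 → Fin 3) (σ : Equiv.Perm (Fin n)) :
    AvoidsPat π σ ↔ Avoids (Matches π) (oneLine σ) := by
  simp [AvoidsPat, Avoids, contains_iff_exists_sublist_oneLine]

theorem card_avoidsPat_desbot_eq (π : Fin 3 → Fin 3) {p : ℕ → ℕ → ℕ → Prop}
    {P : List ℕ → Prop} (hp : ∀ x y z, Matches π x y z ↔ p x y z)
    (hP : ∀ l : List ℕ, l.Nodup → (Avoids p l ↔ P l)) (B : Finset ℕ) :
    ((Finset.univ : Finset (Equiv.Perm (Fin n))).filter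
        fun σ => AvoidsPat π σ ∧ Desbot σ = B).card =
      ((range' 1 n).permutations.toFinset.filter
        fun l => P l ∧ descentBottoms l = B).card := by
  simp only [avoidsPat_iff_avoids_oneLine, desbot_eq_descentBottoms_oneLine]
  rw [card_filter_oneLine fun l => Avoids (Matches π) l ∧ descentBottoms l = B]
  refine congrArg Finset.card (Finset.filter_congr fun l hl => ?_)
  have hnodup : l.Nodup := (mem_permutations.mp (mem_toFinset.mp hl)).nodup_iff.mpr nodup_range'
  rw [avoids_congr hp, hP l hnodup]

end Permutations

end DesbotWilf

theorem desbot_wilf_213_231_312_general (n : ℕ) (B : Finset ℕ) :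
    ((Finset.univ : Finset (Equiv.Perm (Fin n))).filter
        (fun σ => AvoidsPat (![1, 0, 2] : Fin 3 → Fin 3) σ ∧ Desbot σ = B)).card =
      ((Finset.univ : Finset (Equiv.Perm (Fin n))).filter
        (fun σ => AvoidsPat (![1, 2, 0] : Fin 3 → Fin 3) σ ∧ Desbot σ = B)).card ∧
    ((Finset.univ : Finset (Equiv.Perm (Fin n))).filter
        (fun σ => AvoidsPat (![1, 2, 0] : Fin 3 → Fin 3) σ ∧ Desbot σ = B)).card =
      ((Finset.univ : Finset (Equiv.Perm (Fin n))).filter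
        (fun σ => AvoidsPat (![2, 0, 1] : Fin 3 → Fin 3) σ ∧ Desbot σ = B)).card := by
  open DesbotWilf in
  have h213_root := card_avoidsPat_desbot_eq (n := n) ![1, 0, 2]
    (fun _ _ _ => matches_102_iff) (fun _ hl => avoids_iff_rootSplit (r := (· > ·)) hl) B
  have h213_min := card_avoidsPat_desbot_eq (n := n) ![1, 0, 2]
    (fun _ _ _ => matches_102_iff') (fun _ hl => avoids_iff_minSplit (r := (· > ·)) hl) B
  have h231 := card_avoidsPat_desbot_eq (n := n) ![1, 2, 0]
    (fun _ _ _ => matches_120_iff) (fun _ hl => avoids_iff_rootSplit (r := (· < ·)) hl) B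
  have h312 := card_avoidsPat_desbot_eq (n := n) ![2, 0, 1]
    (fun _ _ _ => matches_201_iff) (fun _ hl => avoids_iff_minSplit (r := (· < ·)) hl) B
  have hroot := card_rootSplit_lt_eq_gt (List.range' 1 n) B
  have hmin := card_minSplit_lt_eq_gt (List.range' 1 n) B
  constructor <;> omega

/-- The patterns 213, 231, 312 are Desbot-Wilf equivalent. -/
theorem desbot_wilf_213_231_312 (n : ℕ) (B : Finset ℕ) (hB : B ⊆ Finset.Icc 1 n) :
    ((Finset.univ : Finset (Equiv.Perm (Fin n))).filter
        (fun σ => AvoidsPat (![1, 0, 2] : Fin 3 → Fin 3) σ ∧ Desbot σ = B)).card =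
      ((Finset.univ : Finset (Equiv.Perm (Fin n))).filter
        (fun σ => AvoidsPat (![1, 2, 0] : Fin 3 → Fin 3) σ ∧ Desbot σ = B)).card ∧
    ((Finset.univ : Finset (Equiv.Perm (Fin n))).filter
        (fun σ => AvoidsPat (![1, 2, 0] : Fin 3 → Fin 3) σ ∧ Desbot σ = B)).card =
      ((Finset.univ : Finset (Equiv.Perm (Fin n))).filter
        (fun σ => AvoidsPat (![2, 0, 1] : Fin 3 → Fin 3) σ ∧ Desbot σ = B)).card :=
  desbot_wilf_213_231_312_general n B
end

section
/- For every integer n ≥ 0 and all sets T, B ⊆ [n], the number of permutations σ ∈ Av_n(231) with Destop(σ) = T and Desbot(σ) = B equals the number of permutations σ ∈ Av_n(312) with Destop(σ) = T and Desbot(σ) = B. (Equivalently, the patterns 231 and 312 are (Destop, Desbot)-Wilf equivalent.) -/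
open scoped Classical

/-!
The pair `(Destop, Desbot)` is injective on `Av_n(231)`: reading a `231`-avoider from right to
left, every entry is forced by the later ones and by the descent tops and bottoms. Moreover,
listing the maximal descending runs of a `231`-avoider in increasing order of their first entries
keeps every descent (consecutive runs now meet at ascents) and produces a `312`-avoider. Since
inversion shows `|Av_n(312)| = |Av_n(231)|`, an injection of `Av_n(231)` into the image of
`Av_n(312)` forces all fibres of `(Destop, Desbot)` on the two classes to have equal size.
-/

theorem Finset.card_filter_eq_of_injOn {α β : Type*} [DecidableEq β] {s t : Finset α}
    {f : α → β} (hf : Set.InjOn f s) (hcard : t.card ≤ s.card)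
    (hst : ∀ a ∈ s, ∃ b ∈ t, f b = f a) (y : β) :
    (s.filter (f · = y)).card = (t.filter (f · = y)).card := by
  have hsub : s.image f ⊆ t.image f := by
    intro x hx
    obtain ⟨a, ha, rfl⟩ := Finset.mem_image.mp hx
    obtain ⟨b, hb, hba⟩ := hst a ha
    exact Finset.mem_image.mpr ⟨b, hb, hba⟩
  have hs : (s.image f).card = s.card := Finset.card_image_of_injOn hf
  have himage : s.image f = t.image f :=
    Finset.eq_of_subset_of_card_le hsub (Finset.card_image_le.trans (hcard.trans hs.ge))
  have ht : Set.InjOn f t := Finset.card_image_iff.mp <|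
    le_antisymm Finset.card_image_le (hcard.trans (hs.symm.trans (congrArg Finset.card himage)).le)
  have fiber {u : Finset α} (hu : Set.InjOn f u) :
      (u.filter (f · = y)).card = ((u.image f).filter (· = y)).card := by
    rw [Finset.filter_image,
      Finset.card_image_of_injOn (hu.mono (Finset.coe_subset.mpr (Finset.filter_subset _ _)))]
  rw [fiber hf, fiber ht, himage]

lemma StrictAntiOn.Icc_trans {α β : Type*} [LinearOrder α] [Preorder β] {f : α → β}
    {a b c : α} (hab : StrictAntiOn f (Set.Icc a b)) (hbc : StrictAntiOn f (Set.Icc b c))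
    (h₁ : a ≤ b) (h₂ : b ≤ c) : StrictAntiOn f (Set.Icc a c) := by
  rw [← Set.Icc_union_Icc_eq_Icc h₁ h₂]
  exact hab.union hbc (isGreatest_Icc h₁) (isLeast_Icc h₂)

lemma Fin.covBy_iff_val_eq_succ {n : ℕ} {i j : Fin n} : i ⋖ j ↔ (j : ℕ) = i + 1 := by
  constructor
  · rintro ⟨hij, hcov⟩
    by_contra hne
    rw [Fin.lt_def] at hij
    exact hcov (c := ⟨i + 1, by omega⟩) (Fin.lt_def.mpr (by simp))
      (Fin.lt_def.mpr (by dsimp only; omega))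
  · intro h
    refine ⟨Fin.lt_def.mpr (by omega), fun k hik hkj => ?_⟩
    rw [Fin.lt_def] at hik hkj
    omega

lemma Tuple.strictMono_sort {n : ℕ} {α : Type*} [LinearOrder α] {f : Fin n → α}
    (hf : Function.Injective f) : StrictMono (f ∘ Tuple.sort f) :=
  (Tuple.monotone_sort f).strictMono_of_injective (hf.comp (Tuple.sort f).injective)

lemma Tuple.covBy_iff_sort {n : ℕ} {α : Type*} [LinearOrder α] {f : Fin n → α}
    (hf : Function.Injective f) {i j : Fin n} :
    i ⋖ j ↔ f (Tuple.sort f i) < f (Tuple.sort f j) ∧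
      ∀ c, f (Tuple.sort f i) < f c → ¬ f c < f (Tuple.sort f j) := by
  have hmono := Tuple.strictMono_sort hf
  constructor
  · rintro ⟨hij, hcov⟩
    refine ⟨hmono hij, fun c h₁ h₂ => ?_⟩
    obtain ⟨k, rfl⟩ := (Tuple.sort f).surjective c
    exact hcov (hmono.lt_iff_lt.mp h₁) (hmono.lt_iff_lt.mp h₂)
  · rintro ⟨hij, hcov⟩
    exact ⟨hmono.lt_iff_lt.mp hij, fun k h₁ h₂ => hcov _ (hmono h₁) (hmono h₂)⟩

namespace PermDescent

variable {n : ℕ}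

def IsDescent (σ : Equiv.Perm (Fin n)) (i j : Fin n) : Prop :=
  (j : ℕ) = i + 1 ∧ σ j < σ i

lemma entry_val_succ (σ : Equiv.Perm (Fin n)) (i : Fin n) : entry σ (i + 1) = σ i + 1 := by
  simp [entry]

lemma mem_des {σ : Equiv.Perm (Fin n)} {k : ℕ} :
    k ∈ Des σ ↔ ∃ i j, IsDescent σ i j ∧ (i : ℕ) + 1 = k := by
  constructor
  · intro hk
    obtain ⟨⟨hk1, hkn⟩, hlt⟩ := by
      simpa only [Des, Finset.mem_filter, Finset.mem_Icc] using hk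
    obtain ⟨i, rfl⟩ : ∃ i : Fin n, k = i + 1 :=
      ⟨⟨k - 1, by omega⟩, by dsimp only; omega⟩
    have hj : (i : ℕ) + 1 < n := by omega
    refine ⟨i, ⟨i + 1, hj⟩, ⟨rfl, ?_⟩, rfl⟩
    rw [entry_val_succ, show (i : ℕ) + 1 + 1 = (⟨i + 1, hj⟩ : Fin n) + 1 from rfl,
      entry_val_succ] at hlt
    exact Fin.lt_def.mpr (by omega)
  · rintro ⟨i, j, ⟨hij, hlt⟩, rfl⟩
    simp only [Des, Finset.mem_filter, Finset.mem_Icc]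
    refine ⟨⟨by omega, by omega⟩, ?_⟩
    rw [entry_val_succ, ← hij, entry_val_succ]
    exact Nat.succ_lt_succ hlt

lemma mem_destop {σ : Equiv.Perm (Fin n)} {m : ℕ} :
    m ∈ Destop σ ↔ ∃ i j, IsDescent σ i j ∧ (σ i : ℕ) + 1 = m := by
  simp only [Destop, Finset.mem_image, mem_des]
  constructor
  · rintro ⟨_, ⟨i, j, hd, rfl⟩, rfl⟩
    exact ⟨i, j, hd, (entry_val_succ σ i).symm⟩
  · rintro ⟨i, j, hd, rfl⟩
    exact ⟨_, ⟨i, j, hd, rfl⟩, entry_val_succ σ i⟩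

lemma mem_desbot {σ : Equiv.Perm (Fin n)} {m : ℕ} :
    m ∈ Desbot σ ↔ ∃ i j, IsDescent σ i j ∧ (σ j : ℕ) + 1 = m := by
  simp only [Desbot, Finset.mem_image, mem_des]
  constructor
  · rintro ⟨_, ⟨i, j, hd, rfl⟩, rfl⟩
    exact ⟨i, j, hd, by rw [← hd.1, entry_val_succ]⟩
  · rintro ⟨i, j, hd, rfl⟩
    exact ⟨_, ⟨i, j, hd, rfl⟩, by rw [← hd.1, entry_val_succ]⟩

theorem contains_iff_exists_three {π : Fin 3 → Fin 3} {σ : Equiv.Perm (Fin n)} :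
    Contains π σ ↔ ∃ x y z : Fin n, x < y ∧ y < z ∧
      ∀ i j : Fin 3, π i < π j ↔ σ (![x, y, z] i) < σ (![x, y, z] j) := by
  constructor
  · rintro ⟨f, hf, h⟩
    have hf3 : ![f 0, f 1, f 2] = f := by ext i; fin_cases i <;> rfl
    exact ⟨f 0, f 1, f 2, hf (by decide), hf (by decide), hf3 ▸ h⟩
  · rintro ⟨x, y, z, hxy, hyz, h⟩
    refine ⟨![x, y, z], ?_, h⟩
    simp [Fin.strictMono_iff_lt_succ, Fin.forall_fin_succ, hxy, hyz]

theorem contains_231_iff {σ : Equiv.Perm (Fin n)} :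
    Contains ![1, 2, 0] σ ↔ ∃ x y z, x < y ∧ y < z ∧ σ z < σ x ∧ σ x < σ y := by
  rw [contains_iff_exists_three]
  refine exists₃_congr fun x y z => and_congr_right fun _ => and_congr_right fun _ => ?_
  simp only [Fin.forall_fin_succ, Matrix.cons_val_zero, Matrix.cons_val_succ,
    Matrix.cons_val_fin_one]
  grind

theorem contains_312_iff {σ : Equiv.Perm (Fin n)} :
    Contains ![2, 0, 1] σ ↔ ∃ x y z, x < y ∧ y < z ∧ σ y < σ z ∧ σ z < σ x := by
  rw [contains_iff_exists_three]
  refine exists₃_congr fun x y z => and_congr_right fun _ => and_congr_right fun _ => ?_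
  simp only [Fin.forall_fin_succ, Matrix.cons_val_zero, Matrix.cons_val_succ,
    Matrix.cons_val_fin_one]
  grind

section Avoids231

variable {σ τ : Equiv.Perm (Fin n)}

lemma lt_apply_of_avoids_231 (hσ : AvoidsPat ![1, 2, 0] σ) {x y z : Fin n} (hxy : x < y)
    (hyz : y ≤ z) (h : σ x < σ y) : σ x < σ z := by
  obtain rfl | hyz := hyz.eq_or_lt
  · exact h
  refine lt_of_le_of_ne (not_lt.mp fun hzx => hσ ?_) (σ.injective.ne (hxy.trans hyz).ne)
  exact contains_231_iff.mpr ⟨x, y, z, hxy, hyz, hzx, h⟩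

/-- Read from right to left, a `231`-avoider is forced: at a descent `σ i` is the least unused
value above `σ (i + 1)`, elsewhere it is the least unused value that is not a descent top. -/
lemma apply_le_of_eqOn_Ioi (hσ : AvoidsPat ![1, 2, 0] σ) (hτ : AvoidsPat ![1, 2, 0] τ)
    (htop : Destop σ = Destop τ) (hbot : Desbot σ = Desbot τ) {i : Fin n}
    (hagree : ∀ j, i < j → σ j = τ j) : σ i ≤ τ i := by
  by_cases hdes : ∃ j, IsDescent σ i j
  · obtain ⟨j, hij, hlt⟩ := hdes
    have hj : i < j := Fin.lt_def.mpr (by omega)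
    have hτji : τ j < τ i := by
      obtain ⟨i', j', ⟨hij', hlt'⟩, he⟩ :=
        mem_desbot.mp (hbot ▸ mem_desbot.mpr ⟨i, j, ⟨hij, hlt⟩, rfl⟩)
      obtain rfl : j' = j := τ.injective (Fin.ext (by rw [← hagree j hj]; omega))
      obtain rfl : i' = i := Fin.ext (by omega)
      exact hlt'
    obtain ⟨k, hk⟩ := σ.surjective (τ i)
    rcases lt_trichotomy k i with hki | rfl | hik
    · have hjk : σ j < σ k := by rw [hk, hagree j hj]; exact hτji
      rw [← hk]
      exact not_lt.mp fun hki' => hσ (contains_231_iff.mpr ⟨k, i, j, hki, hj, hjk, hki'⟩)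
    · exact hk.le
    · exact absurd (τ.injective ((hagree k hik).symm.trans hk)) hik.ne'
  · obtain ⟨k, hk⟩ := τ.surjective (σ i)
    rcases lt_trichotomy k i with hki | rfl | hik
    · let k' : Fin n := ⟨k + 1, by omega⟩
      have hasc : τ k < τ k' := by
        refine lt_of_le_of_ne (not_lt.mp fun hdes' => hdes ?_)
          (τ.injective.ne (by simp [k', Fin.ext_iff]))
        obtain ⟨i', j', hd', he⟩ :=
          mem_destop.mp (htop ▸ mem_destop.mpr ⟨k, k', ⟨rfl, hdes'⟩, rfl⟩)
        obtain rfl : i' = i := σ.injective (Fin.ext (by rw [hk] at he; omega))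
        exact ⟨j', hd'⟩
      rw [← hk]
      exact (lt_apply_of_avoids_231 hτ (Fin.lt_def.mpr (by simp [k']))
        (Fin.le_def.mpr (by simp only [k']; omega)) hasc).le
    · exact hk.ge
    · exact absurd (σ.injective ((hagree k hik).trans hk)) hik.ne'

theorem eq_of_destop_eq_of_desbot_eq (hσ : AvoidsPat ![1, 2, 0] σ) (hτ : AvoidsPat ![1, 2, 0] τ)
    (htop : Destop σ = Destop τ) (hbot : Desbot σ = Desbot τ) : σ = τ := by
  ext1 i
  induction i using WellFoundedGT.induction with
  | _ i ih =>
    exact le_antisymm (apply_le_of_eqOn_Ioi hσ hτ htop hbot ih)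
      (apply_le_of_eqOn_Ioi hτ hσ htop.symm hbot.symm fun j hj => (ih j hj).symm)

end Avoids231

section Runs

variable (σ : Equiv.Perm (Fin n))

def runHead (j : Fin n) : Fin n :=
  (Finset.univ.filter fun h => h ≤ j ∧ StrictAntiOn σ (Set.Icc h j)).min'
    ⟨j, by simp [Set.Icc_self]⟩

variable {σ}

lemma runHead_spec (j : Fin n) :
    runHead σ j ≤ j ∧ StrictAntiOn σ (Set.Icc (runHead σ j) j) := by
  unfold runHead
  exact (Finset.mem_filter.mp (Finset.min'_mem
    (Finset.univ.filter fun h => h ≤ j ∧ StrictAntiOn σ (Set.Icc h j)) _)).2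

lemma runHead_le (j : Fin n) : runHead σ j ≤ j := (runHead_spec j).1

lemma strictAntiOn_runHead (j : Fin n) : StrictAntiOn σ (Set.Icc (runHead σ j) j) :=
  (runHead_spec j).2

lemma runHead_le_of_strictAntiOn {h j : Fin n} (hj : h ≤ j)
    (hanti : StrictAntiOn σ (Set.Icc h j)) : runHead σ j ≤ h :=
  Finset.min'_le _ _ (Finset.mem_filter.mpr ⟨Finset.mem_univ _, hj, hanti⟩)

lemma apply_le_apply_runHead (j : Fin n) : σ j ≤ σ (runHead σ j) :=
  (strictAntiOn_runHead j).antitoneOn ⟨le_rfl, runHead_le j⟩ ⟨runHead_le j, le_rfl⟩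
    (runHead_le j)

lemma runHead_eq_of_mem_Icc {j k : Fin n} (hk : k ∈ Set.Icc (runHead σ j) j) :
    runHead σ k = runHead σ j := by
  refine le_antisymm (runHead_le_of_strictAntiOn hk.1
    ((strictAntiOn_runHead j).mono (Set.Icc_subset_Icc_right hk.2))) (not_lt.mp fun hlt => ?_)
  have hanti : StrictAntiOn σ (Set.Icc (runHead σ k) j) :=
    ((strictAntiOn_runHead (σ := σ) k).mono (Set.Icc_subset_Icc_right hk.1)).Icc_trans
      (strictAntiOn_runHead j) hlt.le (runHead_le j)
  exact hlt.not_ge (runHead_le_of_strictAntiOn ((runHead_le k).trans hk.2) hanti)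

lemma runHead_runHead (j : Fin n) : runHead σ (runHead σ j) = runHead σ j :=
  runHead_eq_of_mem_Icc ⟨le_rfl, runHead_le j⟩

lemma runHead_eq_of_isDescent {a b : Fin n} (hd : IsDescent σ a b) :
    runHead σ b = runHead σ a := by
  have hba := hd.1
  have hab : a ≤ b := Fin.le_def.mpr (by omega)
  have hanti : StrictAntiOn σ (Set.Icc a b) := fun x hx y hy hxy => by
    obtain ⟨rfl, rfl⟩ : x = a ∧ y = b := by
      simp only [Set.mem_Icc, Fin.le_def, Fin.lt_def, Fin.ext_iff] at hx hy hxy ⊢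
      omega
    exact hd.2
  have hle : runHead σ b ≤ a := (runHead_le_of_strictAntiOn ((runHead_le a).trans hab)
    ((strictAntiOn_runHead (σ := σ) a).Icc_trans hanti (runHead_le a) hab)).trans (runHead_le a)
  exact (runHead_eq_of_mem_Icc ⟨hle, hab⟩).symm

variable (σ) in
def runKey (j : Fin n) : Fin n ×ₗ Fin n :=
  toLex (σ (runHead σ j), j)

lemma runKey_injective : Function.Injective (runKey σ) :=
  fun _ _ h => (Prod.ext_iff.mp (toLex.injective h)).2

lemma runKey_lt_iff {a b : Fin n} :
    runKey σ a < runKey σ b ↔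
      σ (runHead σ a) < σ (runHead σ b) ∨ runHead σ a = runHead σ b ∧ a < b := by
  simp [runKey, Prod.Lex.toLex_lt_toLex]

lemma runKey_lt_of_runHead_eq {a b : Fin n} (h : runHead σ a = runHead σ b) (hab : a < b) :
    runKey σ a < runKey σ b :=
  runKey_lt_iff.mpr (Or.inr ⟨h, hab⟩)

lemma apply_runHead_le_of_runKey_lt {a b : Fin n} (h : runKey σ a < runKey σ b) :
    σ (runHead σ a) ≤ σ (runHead σ b) := by
  rcases runKey_lt_iff.mp h with h | ⟨h, -⟩
  · exact h.le
  · rw [h]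

end Runs

section SortRuns

variable {σ : Equiv.Perm (Fin n)}

/-- Of two key-adjacent positions in different runs, the later one heads its run and so exceeds
the earlier one. -/
lemma isDescent_iff_runKey_covBy {a b : Fin n} :
    IsDescent σ a b ↔ (runKey σ a < runKey σ b ∧
      ∀ c, runKey σ a < runKey σ c → ¬ runKey σ c < runKey σ b) ∧ σ b < σ a := by
  constructor
  · intro hd
    have hrh := runHead_eq_of_isDescent hd
    have hba := hd.1
    refine ⟨⟨runKey_lt_of_runHead_eq hrh.symm (Fin.lt_def.mpr (by omega)),
      fun c hac hcb => ?_⟩,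
      hd.2⟩
    rw [runKey_lt_iff] at hac hcb
    rw [hrh] at hcb
    rcases hac with h₁ | ⟨h₁, h₁'⟩ <;> rcases hcb with h₂ | ⟨h₂, h₂'⟩
    · exact lt_asymm h₁ h₂
    · exact (h₂ ▸ h₁).false
    · exact (h₁ ▸ h₂).false
    · rw [Fin.lt_def] at h₁' h₂'
      omega
  · rintro ⟨⟨hab, hcov⟩, hlt⟩
    refine ⟨?_, hlt⟩
    rcases runKey_lt_iff.mp hab with hhead | ⟨hrh, hab⟩
    · have hb : runHead σ b = b := by
        refine (runHead_le b).eq_or_lt.resolve_right fun hb => hcov (runHead σ b) ?_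
          (runKey_lt_of_runHead_eq (runHead_runHead b) hb)
        exact runKey_lt_iff.mpr (Or.inl (by rwa [runHead_runHead]))
      rw [hb] at hhead
      exact absurd ((apply_le_apply_runHead a).trans_lt hhead) hlt.not_gt
    · by_contra hne
      rw [Fin.lt_def] at hab
      let c : Fin n := ⟨a + 1, by omega⟩
      have hac : a < c := Fin.lt_def.mpr (by simp [c])
      have hcb : c < b := Fin.lt_def.mpr (by simp only [c]; omega)
      have hc : runHead σ c = runHead σ b :=
        runHead_eq_of_mem_Icc ⟨(hrh ▸ runHead_le a).trans hac.le, hcb.le⟩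
      exact hcov c (runKey_lt_of_runHead_eq (hrh.trans hc.symm) hac)
        (runKey_lt_of_runHead_eq hc hcb)

lemma contains_231_of_runKey_lt {b c : Fin n} (hbc : runKey σ b < runKey σ c)
    (hσbc : σ b < σ c) (hσcb : σ c < σ (runHead σ b)) : Contains ![1, 2, 0] σ := by
  have hhead : σ (runHead σ b) < σ (runHead σ c) := by
    refine (runKey_lt_iff.mp hbc).resolve_right fun ⟨hrh, hlt⟩ => hσbc.not_gt ?_
    exact strictAntiOn_runHead c ⟨hrh ▸ runHead_le b, hlt.le⟩ ⟨runHead_le c, le_rfl⟩ hlt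
  have hheads : runHead σ b ≠ runHead σ c := fun h => (h ▸ hhead).false
  have hc : runHead σ c < c := (runHead_le c).lt_of_ne fun h => by
    rw [h] at hhead
    exact lt_asymm hσcb hhead
  rw [contains_231_iff]
  rcases lt_or_ge b (runHead σ c) with hb | hb
  · exact ⟨runHead σ b, runHead σ c, c, (runHead_le b).trans_lt hb, hc, hσcb, hhead⟩
  · have hcb : c < b := by
      rcases lt_trichotomy c b with h | rfl | h
      · exact h
      · exact absurd hσbc (lt_irrefl _)
      · exact absurd (runHead_eq_of_mem_Icc ⟨hb, h.le⟩) hheads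
    have hcrb : c < runHead σ b :=
      not_le.mp fun h => hheads (runHead_eq_of_mem_Icc ⟨h, hcb.le⟩).symm
    have hrb : runHead σ b < b := (runHead_le b).lt_of_ne fun h => by
      rw [h] at hσcb
      exact lt_asymm hσbc hσcb
    exact ⟨c, runHead σ b, b, hcrb, hrb, hσbc, hσcb⟩

variable (σ) in
def sortRuns : Equiv.Perm (Fin n) :=
  (Tuple.sort (runKey σ)).trans σ

lemma isDescent_sortRuns_iff {i j : Fin n} :
    IsDescent (sortRuns σ) i j ↔
      IsDescent σ (Tuple.sort (runKey σ) i) (Tuple.sort (runKey σ) j) := by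
  rw [isDescent_iff_runKey_covBy (σ := σ), ← Tuple.covBy_iff_sort runKey_injective,
    Fin.covBy_iff_val_eq_succ]
  rfl

lemma destop_trans_eq {π : Equiv.Perm (Fin n)}
    (h : ∀ i j, IsDescent (π.trans σ) i j ↔ IsDescent σ (π i) (π j)) :
    Destop (π.trans σ) = Destop σ := by
  ext m
  simp only [mem_destop, h, Equiv.trans_apply]
  exact (π.surjective.exists₂ (p := fun i j => IsDescent σ i j ∧ (σ i : ℕ) + 1 = m)).symm

lemma desbot_trans_eq {π : Equiv.Perm (Fin n)}
    (h : ∀ i j, IsDescent (π.trans σ) i j ↔ IsDescent σ (π i) (π j)) :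
    Desbot (π.trans σ) = Desbot σ := by
  ext m
  simp only [mem_desbot, h, Equiv.trans_apply]
  exact (π.surjective.exists₂ (p := fun i j => IsDescent σ i j ∧ (σ j : ℕ) + 1 = m)).symm

theorem destop_sortRuns : Destop (sortRuns σ) = Destop σ :=
  destop_trans_eq fun _ _ => isDescent_sortRuns_iff

theorem desbot_sortRuns : Desbot (sortRuns σ) = Desbot σ :=
  desbot_trans_eq fun _ _ => isDescent_sortRuns_iff

theorem avoids_312_sortRuns (hσ : AvoidsPat ![1, 2, 0] σ) :
    AvoidsPat ![2, 0, 1] (sortRuns σ) := fun hc => by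
  obtain ⟨p, q, r, hpq, hqr, h₁, h₂⟩ := contains_312_iff.mp hc
  have hmono := Tuple.strictMono_sort (runKey_injective (σ := σ))
  refine hσ (contains_231_of_runKey_lt (hmono hqr) h₁ (h₂.trans_le ?_))
  exact (apply_le_apply_runHead (σ := σ) _).trans (apply_runHead_le_of_runKey_lt (hmono hpq))

end SortRuns

lemma avoids_231_inv {σ : Equiv.Perm (Fin n)} (hσ : AvoidsPat ![2, 0, 1] σ) :
    AvoidsPat ![1, 2, 0] σ⁻¹ := fun hc => hσ <| by
  obtain ⟨x, y, z, hxy, hyz, h₁, h₂⟩ := contains_231_iff.mp hc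
  exact contains_312_iff.mpr
    ⟨σ⁻¹ z, σ⁻¹ x, σ⁻¹ y, h₁, h₂, by simpa using hxy, by simpa using hyz⟩

theorem card_avoids_312_le_card_avoids_231 :
    (Finset.univ.filter (AvoidsPat (n := n) ![2, 0, 1])).card ≤
      (Finset.univ.filter (AvoidsPat (n := n) ![1, 2, 0])).card :=
  Finset.card_le_card_of_injOn (·⁻¹)
    (fun σ hσ => by simpa using avoids_231_inv (by simpa using hσ)) inv_injective.injOn

theorem injOn_destop_desbot :
    Set.InjOn (fun σ : Equiv.Perm (Fin n) => (Destop σ, Desbot σ))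
      (Finset.univ.filter (AvoidsPat (n := n) ![1, 2, 0]) : Set (Equiv.Perm (Fin n))) := by
  intro σ hσ τ hτ h
  simp only [Finset.mem_coe, Finset.mem_filter, Finset.mem_univ, true_and] at hσ hτ
  exact eq_of_destop_eq_of_desbot_eq hσ hτ (congrArg Prod.fst h) (congrArg Prod.snd h)

end PermDescent

theorem destop_desbot_wilf_231_312_general (n : ℕ) (T B : Finset ℕ) :
    ((Finset.univ : Finset (Equiv.Perm (Fin n))).filter
        (fun σ => AvoidsPat (![1, 2, 0] : Fin 3 → Fin 3) σ ∧ Destop σ = T ∧ Desbot σ = B)).card =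
      ((Finset.univ : Finset (Equiv.Perm (Fin n))).filter
        (fun σ => AvoidsPat (![2, 0, 1] : Fin 3 → Fin 3) σ ∧ Destop σ = T ∧ Desbot σ = B)).card := by
  have hfiber := Finset.card_filter_eq_of_injOn (PermDescent.injOn_destop_desbot (n := n))
    PermDescent.card_avoids_312_le_card_avoids_231
    (fun σ hσ => ⟨PermDescent.sortRuns σ,
      by simpa using PermDescent.avoids_312_sortRuns (Finset.mem_filter.mp hσ).2,
      Prod.ext PermDescent.destop_sortRuns PermDescent.desbot_sortRuns⟩) (T, B)
  simpa only [Finset.filter_filter, Prod.ext_iff] using hfiber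

/-- The patterns 231 and 312 are (Destop, Desbot)-Wilf equivalent. -/
theorem destop_desbot_wilf_231_312 (n : ℕ) (T B : Finset ℕ)
    (hT : T ⊆ Finset.Icc 1 n) (hB : B ⊆ Finset.Icc 1 n) :
    ((Finset.univ : Finset (Equiv.Perm (Fin n))).filter
        (fun σ => AvoidsPat (![1, 2, 0] : Fin 3 → Fin 3) σ ∧ Destop σ = T ∧ Desbot σ = B)).card =
      ((Finset.univ : Finset (Equiv.Perm (Fin n))).filter
        (fun σ => AvoidsPat (![2, 0, 1] : Fin 3 → Fin 3) σ ∧ Destop σ = T ∧ Desbot σ = B)).card :=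
  destop_desbot_wilf_231_312_general n T B
end

section
/- Let (T, B) be a descent matching of size k, and let n be an integer with n ≥ max(T) if k > 0, or n ≥ 0 arbitrary if k = 0. Then there exists a unique permutation π ∈ Av_n(231) such that Destop(π) = T and Desbot(π) = B. -/
open scoped Classical

/-- `i`-th entry (0-based) with default 0. -/
def gE (l : List ℕ) (i : ℕ) : ℕ := l.getD i 0

def ITop (l : List ℕ) (t : ℕ) : Prop :=
  ∃ i, i + 1 < l.length ∧ gE l i = t ∧ gE l (i + 1) < t

def IBot (l : List ℕ) (b : ℕ) : Prop :=
  ∃ i, i + 1 < l.length ∧ gE l (i + 1) = b ∧ b < gE l i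

def Avl (l : List ℕ) : Prop :=
  ∀ i j k, i < j → j < k → k < l.length → ¬(gE l k < gE l i ∧ gE l i < gE l j)

lemma gE_append_lt (l : List ℕ) (c : ℕ) {i : ℕ} (h : i < l.length) :
    gE (l ++ [c]) i = gE l i := by
  simp [gE, List.getD, List.getElem?_append_left h]

lemma gE_append_eq (l : List ℕ) (c : ℕ) : gE (l ++ [c]) l.length = c := by
  simp [gE, List.getD]

lemma gE_mem {l : List ℕ} {i : ℕ} (h : i < l.length) : gE l i ∈ l := by
  simp [gE, List.getD, List.getElem?_eq_getElem h]

lemma gE_pos_lt {l : List ℕ} {i : ℕ} (h : i < l.length) : gE l i = l[i] := by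
  simp [gE, List.getD, List.getElem?_eq_getElem h]

lemma gE_inj {l : List ℕ} (hnd : l.Nodup) {i j : ℕ} (hi : i < l.length)
    (hj : j < l.length) (h : gE l i = gE l j) : i = j := by
  rw [gE_pos_lt hi, gE_pos_lt hj] at h
  exact (List.Nodup.getElem_inj_iff hnd).mp h

lemma mem_iff_gE {l : List ℕ} {v : ℕ} : v ∈ l ↔ ∃ i, i < l.length ∧ gE l i = v := by
  rw [List.mem_iff_getElem]
  constructor
  · rintro ⟨i, hi, rfl⟩; exact ⟨i, hi, gE_pos_lt hi⟩
  · rintro ⟨i, hi, h⟩; exact ⟨i, hi, by rw [← gE_pos_lt hi, h]⟩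

lemma ITop_append (l : List ℕ) (c t : ℕ) :
    ITop (l ++ [c]) t ↔ ITop l t ∨ (l.length ≠ 0 ∧ gE l (l.length - 1) = t ∧ c < t) := by
  constructor
  · rintro ⟨i, hi, he, hlt⟩
    simp only [List.length_append, List.length_singleton] at hi
    rcases lt_or_eq_of_le (Nat.lt_succ_iff.mp hi) with h | h
    · left; exact ⟨i, h, by rw [← gE_append_lt l c (by omega), he],
        by rw [← gE_append_lt l c h]; exact hlt⟩
    · right
      refine ⟨by omega, ?_, ?_⟩
      · rw [← he, ← gE_append_lt l c (i := l.length - 1) (by omega)]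
        congr 1; omega
      · rw [← he] at hlt ⊢
        have : i = l.length - 1 := by omega
        rw [h] at hlt; rw [gE_append_eq] at hlt; exact hlt
  · rintro (⟨i, hi, he, hlt⟩ | ⟨hne, he, hlt⟩)
    · exact ⟨i, by simp; omega, by rw [gE_append_lt l c (by omega)]; exact he,
        by rw [gE_append_lt l c hi]; exact hlt⟩
    · refine ⟨l.length - 1, by simp; omega, ?_, ?_⟩
      · rw [gE_append_lt l c (by omega)]; exact he
      · have : l.length - 1 + 1 = l.length := by omega
        rw [this, gE_append_eq]; exact hlt

lemma IBot_append (l : List ℕ) (c b : ℕ) :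
    IBot (l ++ [c]) b ↔ IBot l b ∨ (l.length ≠ 0 ∧ b = c ∧ c < gE l (l.length - 1)) := by
  constructor
  · rintro ⟨i, hi, he, hlt⟩
    simp only [List.length_append, List.length_singleton] at hi
    rcases lt_or_eq_of_le (Nat.lt_succ_iff.mp hi) with h | h
    · left; exact ⟨i, h, by rw [← gE_append_lt l c h]; exact he,
        by rw [← gE_append_lt l c (by omega)]; exact hlt⟩
    · right
      refine ⟨by omega, ?_, ?_⟩
      · rw [← he, h, gE_append_eq]
      · rw [h, gE_append_eq] at he
        rw [← he] at hlt
        have h2 : i = l.length - 1 := by omega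
        rw [← h2, ← gE_append_lt l c (by omega : i < l.length)]
        exact hlt
  · rintro (⟨i, hi, he, hlt⟩ | ⟨hne, he, hlt⟩)
    · exact ⟨i, by simp; omega, by rw [gE_append_lt l c hi]; exact he,
        by rw [gE_append_lt l c (by omega)]; exact hlt⟩
    · refine ⟨l.length - 1, by simp; omega, ?_, ?_⟩
      · have : l.length - 1 + 1 = l.length := by omega
        rw [this, gE_append_eq]; exact he.symm
      · rw [gE_append_lt l c (by omega), he]; exact hlt

lemma Avl_append (l : List ℕ) (c : ℕ) :
    Avl (l ++ [c]) ↔ Avl l ∧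
      ∀ i j, i < j → j < l.length → ¬(c < gE l i ∧ gE l i < gE l j) := by
  constructor
  · intro h
    constructor
    · intro i j k hij hjk hk ⟨h1, h2⟩
      refine h i j k hij hjk (by simp; omega) ⟨?_, ?_⟩
      · rwa [gE_append_lt l c hk, gE_append_lt l c (by omega)]
      · rwa [gE_append_lt l c (by omega), gE_append_lt l c (by omega)]
    · intro i j hij hj ⟨h1, h2⟩
      refine h i j l.length hij hj (by simp) ⟨?_, ?_⟩
      · rwa [gE_append_eq, gE_append_lt l c (by omega)]
      · rwa [gE_append_lt l c (by omega), gE_append_lt l c hj]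
  · rintro ⟨h1, h2⟩ i j k hij hjk hk ⟨ha, hb⟩
    simp only [List.length_append, List.length_singleton] at hk
    rcases lt_or_eq_of_le (Nat.lt_succ_iff.mp hk) with h | h
    · rw [gE_append_lt l c h, gE_append_lt l c (show i < l.length by omega)] at ha
      rw [gE_append_lt l c (show i < l.length by omega), gE_append_lt l c (show j < l.length by omega)] at hb
      exact h1 i j k hij hjk h ⟨ha, hb⟩
    · rw [h, gE_append_eq, gE_append_lt l c (by omega)] at ha
      rw [gE_append_lt l c (by omega), gE_append_lt l c (by omega)] at hb
      exact h2 i j hij (by omega) ⟨ha, hb⟩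

lemma last_not_top {l : List ℕ} (hnd : l.Nodup) (hlen : l.length ≠ 0) :
    ¬ ITop l (gE l (l.length - 1)) := by
  rintro ⟨i, hi, he, hlt⟩
  have := gE_inj hnd (by omega : i < l.length) (by omega : l.length - 1 < l.length) he
  omega

lemma last_max {l : List ℕ} (hnd : l.Nodup) (hav : Avl l) {v : ℕ} (hv : v ∈ l)
    (hnt : ¬ ITop l v) : v ≤ gE l (l.length - 1) := by
  obtain ⟨i, hi, he⟩ := mem_iff_gE.mp hv
  rcases eq_or_lt_of_le (show i + 1 ≤ l.length by omega) with h | h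
  · have h3 : i = l.length - 1 := by omega
    rw [← he, h3]
  · -- i + 1 < l.length, so v is followed by something
    have hgt : v < gE l (i + 1) := by
      rcases lt_trichotomy (gE l (i + 1)) v with hc | hc | hc
      · exact absurd ⟨i, h, he, hc⟩ hnt
      · exfalso
        have := gE_inj hnd (by omega : i + 1 < l.length) hi (hc.trans he.symm)
        omega
      · exact hc
    rcases eq_or_lt_of_le (show i + 1 ≤ l.length - 1 by omega) with h2 | h2
    · rw [← h2]; omega
    · by_contra hcon
      push_neg at hcon
      have hne : gE l (l.length - 1) ≠ v := by
        intro hh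
        have := gE_inj hnd (by omega : l.length - 1 < l.length) hi (hh.trans he.symm)
        omega
      exact hav i (i + 1) (l.length - 1) (by omega) h2 (by omega)
        ⟨by omega, by omega⟩

lemma no_ascent_tops {l : List ℕ} (hnd : l.Nodup) (hav : Avl l) {i j : ℕ}
    (hij : i < j) (hj : j < l.length) (hlt : gE l i < gE l j)
    (htops : ∀ w ∈ l, gE l i ≤ w → w ≤ gE l j → ITop l w) : False := by
  set u := gE l i with hu
  set v := gE l j with hv
  have key : ∀ e q, i < q → q < l.length → gE l q = e → u < e → e ≤ v →
      ∃ p, q < p ∧ p < l.length ∧ gE l p < u := by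
    intro e
    induction e using Nat.strong_induction_on with
    | _ e IH =>
      intro q hiq hq hqe hue hev
      have htop : ITop l e := htops e (hqe ▸ gE_mem hq) (by omega) hev
      obtain ⟨r, hr, hre, hrlt⟩ := htop
      have hrq : r = q := gE_inj hnd (by omega) hq (by rw [hre, hqe])
      subst hrq
      set z := gE l (r + 1) with hz
      rcases lt_trichotomy z u with hc | hc | hc
      · exact ⟨r + 1, by omega, hr, hc⟩
      · exfalso
        have := gE_inj hnd (by omega : r + 1 < l.length) (by omega : i < l.length) (by rw [← hz, ← hu, hc])
        omega
      · obtain ⟨p, hp1, hp2, hp3⟩ := IH z (by omega) (r + 1) (by omega) hr rfl hc (by omega)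
        exact ⟨p, by omega, hp2, hp3⟩
  obtain ⟨p, hp1, hp2, hp3⟩ := key v j hij hj rfl hlt le_rfl
  exact hav i j p hij hp1 hp2 ⟨hp3, hlt⟩

open scoped Classical

def Sol (S T B : Finset ℕ) (l : List ℕ) : Prop :=
  l.Nodup ∧ l.toFinset = S ∧ Avl l ∧ (∀ t, ITop l t ↔ t ∈ T) ∧ (∀ b, IBot l b ↔ b ∈ B)

lemma sol_length {S T B : Finset ℕ} {l : List ℕ} (h : Sol S T B l) :
    l.length = S.card := by
  rw [← h.2.1, List.toFinset_card_of_nodup h.1]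

lemma sol_mem {S T B : Finset ℕ} {l : List ℕ} (h : Sol S T B l) {v : ℕ} :
    v ∈ l ↔ v ∈ S := by
  rw [← h.2.1, List.mem_toFinset]

lemma sol_last_eq {S T B : Finset ℕ} {l : List ℕ} (h : Sol S T B l)
    (hne : (S \ T).Nonempty) (hlen : l.length ≠ 0) :
    gE l (l.length - 1) = (S \ T).max' hne := by
  set c := (S \ T).max' hne with hc
  have hcS : c ∈ S \ T := Finset.max'_mem _ hne
  apply le_antisymm
  · -- last ≤ c since last ∈ S \ T
    apply Finset.le_max'
    rw [Finset.mem_sdiff]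
    constructor
    · exact (sol_mem h).mp (gE_mem (by omega))
    · intro hT
      exact last_not_top h.1 hlen ((h.2.2.2.1 _).mpr hT)
  · -- c ≤ last by last_max
    apply last_max h.1 h.2.2.1
    · exact (sol_mem h).mpr (Finset.mem_sdiff.mp hcS).1
    · intro htop
      exact (Finset.mem_sdiff.mp hcS).2 ((h.2.2.2.1 _).mp htop)

lemma decomp_self {l : List ℕ} (h : l.length ≠ 0) :
    l.dropLast ++ [gE l (l.length - 1)] = l := by
  rcases List.eq_nil_or_concat l with rfl | ⟨l', d, rfl⟩
  · simp at h
  · rw [List.concat_eq_append]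
    have h2 : (l' ++ [d]).length - 1 = l'.length := by simp
    rw [h2, gE_append_eq, List.dropLast_concat]

lemma union_singleton_finset {S : Finset ℕ} {c : ℕ} (hc : c ∈ S) :
    S.erase c ∪ {c} = S := by
  ext x
  rcases eq_or_ne x c with rfl | hx
  · simp [hc]
  · simp [Finset.mem_erase, hx]

lemma solA {S T B : Finset ℕ} (hne : (S \ T).Nonempty) (hcB : (S \ T).max' hne ∉ B)
    (l' : List ℕ) :
    Sol S T B (l' ++ [(S \ T).max' hne]) ↔ Sol (S.erase ((S \ T).max' hne)) T B l' := by
  set c := (S \ T).max' hne with hcdef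
  have hcS : c ∈ S := (Finset.mem_sdiff.mp (Finset.max'_mem _ hne)).1
  have hcT : c ∉ T := (Finset.mem_sdiff.mp (Finset.max'_mem _ hne)).2
  have hmax : ∀ v ∈ S, v ∉ T → v ≤ c := fun v hv hvt =>
    Finset.le_max' _ v (Finset.mem_sdiff.mpr ⟨hv, hvt⟩)
  constructor
  · rintro ⟨hnd, htf, hav, htop, hbot⟩
    have hnd' : l'.Nodup := (List.nodup_append.mp hnd).1
    have hcl' : c ∉ l' := fun hmem => (List.nodup_append'.mp hnd).2.2 hmem (by simp)
    have htf' : l'.toFinset = S.erase c := by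
      ext x
      rw [Finset.mem_erase]
      constructor
      · intro hx
        refine ⟨fun hh => hcl' (hh ▸ (List.mem_toFinset.mp hx)), ?_⟩
        rw [← htf]; simp [List.mem_toFinset.mp hx]
      · rintro ⟨hx1, hx2⟩
        rw [← htf] at hx2
        simp at hx2
        rcases hx2 with h | h
        · exact absurd h hx1
        · exact List.mem_toFinset.mpr h
    have hjunction : l'.length ≠ 0 → gE l' (l'.length - 1) < c := by
      intro h0
      have hmem : gE l' (l'.length - 1) ∈ l' := gE_mem (by omega)
      have hne2 : gE l' (l'.length - 1) ≠ c := fun hh => hcl' (hh ▸ hmem)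
      rcases lt_or_ge (gE l' (l'.length - 1)) c with h | h
      · exact h
      · exfalso
        have : c < gE l' (l'.length - 1) := lt_of_le_of_ne h (Ne.symm hne2)
        exact hcB ((hbot c).mp ((IBot_append l' c c).mpr (Or.inr ⟨h0, rfl, this⟩)))
    refine ⟨hnd', htf', (Avl_append l' c).mp hav |>.1, ?_, ?_⟩
    · intro t
      rw [← htop t, ITop_append]
      constructor
      · exact Or.inl
      · rintro (h | ⟨h1, h2, h3⟩)
        · exact h
        · exact absurd (h2 ▸ hjunction h1) (by omega)
    · intro b
      rw [← hbot b, IBot_append]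
      constructor
      · exact Or.inl
      · rintro (h | ⟨h1, h2, h3⟩)
        · exact h
        · exact absurd (hjunction h1) (by omega)
  · rintro ⟨hnd', htf', hav', htop', hbot'⟩
    have hcl' : c ∉ l' := fun hmem => by
      have := htf' ▸ List.mem_toFinset.mpr hmem
      exact (Finset.mem_erase.mp this).1 rfl
    have hnd : (l' ++ [c]).Nodup := by
      rw [List.nodup_append']
      exact ⟨hnd', List.nodup_singleton c, fun a ha hb => by
        simp at hb; subst hb; exact hcl' ha⟩
    have htf : (l' ++ [c]).toFinset = S := by
      rw [List.toFinset_append, htf']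
      simp only [List.toFinset_cons, List.toFinset_nil, insert_empty_eq]
      exact union_singleton_finset hcS
    by_cases h0 : l'.length = 0
    · have hl'nil : l' = [] := List.length_eq_zero_iff.mp h0
      subst hl'nil
      have hT : T = ∅ := by
        ext t; simp only [Finset.notMem_empty, iff_false]
        intro ht
        obtain ⟨i, hi, -, -⟩ := (htop' t).mpr ht
        simp at hi
      have hB : B = ∅ := by
        ext b; simp only [Finset.notMem_empty, iff_false]
        intro hb
        obtain ⟨i, hi, -, -⟩ := (hbot' b).mpr hb
        simp at hi
      refine ⟨hnd, htf, ?_, ?_, ?_⟩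
      · intro i j k hij hjk hk
        simp at hk; omega
      · intro t
        rw [hT]; simp only [Finset.notMem_empty, iff_false]
        rintro ⟨i, hi, -, -⟩
        simp at hi
      · intro b
        rw [hB]; simp only [Finset.notMem_empty, iff_false]
        rintro ⟨i, hi, -, -⟩
        simp at hi
    · have hlastmem : gE l' (l'.length - 1) ∈ l' := gE_mem (by omega)
      have hlastS : gE l' (l'.length - 1) ∈ S.erase c := htf' ▸ List.mem_toFinset.mpr hlastmem
      have hlastT : gE l' (l'.length - 1) ∉ T := fun hh =>
        last_not_top hnd' h0 ((htop' _).mpr hh)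
      have hjunction : gE l' (l'.length - 1) < c :=
        lt_of_le_of_ne (hmax _ (Finset.mem_of_mem_erase hlastS) hlastT)
          (Finset.mem_erase.mp hlastS).1
      refine ⟨hnd, htf, ?_, ?_, ?_⟩
      · rw [Avl_append]
        refine ⟨hav', ?_⟩
        rintro i j hij hj ⟨h1, h2⟩
        refine no_ascent_tops hnd' hav' hij hj h2 (fun w hw hw1 hw2 => ?_)
        have hwS : w ∈ S.erase c := htf' ▸ List.mem_toFinset.mpr hw
        have hwT : w ∈ T := by
          by_contra hwT
          have := hmax w (Finset.mem_of_mem_erase hwS) hwT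
          omega
        exact (htop' w).mpr hwT
      · intro t
        rw [ITop_append]
        constructor
        · rintro (h | ⟨h1, h2, h3⟩)
          · exact (htop' t).mp h
          · omega
        · intro ht; exact Or.inl ((htop' t).mpr ht)
      · intro b
        rw [IBot_append]
        constructor
        · rintro (h | ⟨h1, h2, h3⟩)
          · exact (hbot' b).mp h
          · omega
        · intro hb; exact Or.inl ((hbot' b).mpr hb)

lemma IBot_mem {l : List ℕ} {b : ℕ} (h : IBot l b) : b ∈ l := by
  obtain ⟨i, hi, he, -⟩ := h
  exact he ▸ gE_mem (by omega)

lemma ITop_mem {l : List ℕ} {t : ℕ} (h : ITop l t) : t ∈ l := by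
  obtain ⟨i, hi, he, -⟩ := h
  exact he ▸ gE_mem (by omega)

lemma solB {S T B : Finset ℕ} (hTS : T ⊆ S) (hne : (S \ T).Nonempty)
    (hcB : (S \ T).max' hne ∈ B)
    (hta : (T.filter (fun t => (S \ T).max' hne < t)).Nonempty)
    (l' : List ℕ) :
    Sol S T B (l' ++ [(S \ T).max' hne]) ↔
      Sol (S.erase ((S \ T).max' hne))
        (T.erase ((T.filter (fun t => (S \ T).max' hne < t)).min' hta))
        (B.erase ((S \ T).max' hne)) l' := by
  set c := (S \ T).max' hne with hcdef
  set a := (T.filter (fun t => c < t)).min' hta with hadef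
  have hcS : c ∈ S := (Finset.mem_sdiff.mp (Finset.max'_mem _ hne)).1
  have hcT : c ∉ T := (Finset.mem_sdiff.mp (Finset.max'_mem _ hne)).2
  have hmax : ∀ v ∈ S, v ∉ T → v ≤ c := fun v hv hvt =>
    Finset.le_max' _ v (Finset.mem_sdiff.mpr ⟨hv, hvt⟩)
  have haT : a ∈ T := (Finset.mem_filter.mp (Finset.min'_mem _ hta)).1
  have hac : c < a := (Finset.mem_filter.mp (Finset.min'_mem _ hta)).2
  have hamin : ∀ t ∈ T, c < t → a ≤ t := fun t ht hct =>
    Finset.min'_le _ t (Finset.mem_filter.mpr ⟨ht, hct⟩)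
  constructor
  · rintro ⟨hnd, htf, hav, htop, hbot⟩
    have hnd' : l'.Nodup := (List.nodup_append.mp hnd).1
    have hcl' : c ∉ l' := fun hmem => (List.nodup_append'.mp hnd).2.2 hmem (by simp [hcdef])
    have htf' : l'.toFinset = S.erase c := by
      ext x
      rw [Finset.mem_erase]
      constructor
      · intro hx
        refine ⟨fun hh => hcl' (hh ▸ (List.mem_toFinset.mp hx)), ?_⟩
        rw [← htf]; simp [List.mem_toFinset.mp hx]
      · rintro ⟨hx1, hx2⟩
        rw [← htf] at hx2
        simp at hx2
        rcases hx2 with h | h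
        · exact absurd h hx1
        · exact List.mem_toFinset.mpr h
    obtain ⟨h0, -, hclast⟩ : l'.length ≠ 0 ∧ c = c ∧ c < gE l' (l'.length - 1) := by
      rcases (IBot_append l' c c).mp ((hbot c).mpr hcB) with h | h
      · exact absurd (IBot_mem h) hcl'
      · exact h
    have hlastT : gE l' (l'.length - 1) ∈ T :=
      (htop _).mp ((ITop_append l' c _).mpr (Or.inr ⟨h0, rfl, hclast⟩))
    have hlast_min : ∀ t ∈ T, c < t → gE l' (l'.length - 1) ≤ t := by
      intro t ht hct
      by_contra hcon
      push_neg at hcon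
      have htS : t ∈ S := hTS ht
      have htc : t ≠ c := fun hh => hcT (hh ▸ ht)
      have htl' : t ∈ l' := by
        rw [← List.mem_toFinset, htf', Finset.mem_erase]; exact ⟨htc, htS⟩
      obtain ⟨q, hq, hqe⟩ := mem_iff_gE.mp htl'
      have hqne : q ≠ l'.length - 1 := by
        intro hh
        rw [hh] at hqe; omega
      have hq' : q < l'.length - 1 := by omega
      refine hav q (l'.length - 1) l'.length hq' (by omega) (by simp) ⟨?_, ?_⟩
      · rw [gE_append_eq, gE_append_lt _ _ hq, hqe]; exact hct
      · rw [gE_append_lt _ _ hq, gE_append_lt _ _ (by omega), hqe]; exact hcon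
    have hlasta : gE l' (l'.length - 1) = a :=
      le_antisymm (hlast_min a haT hac) (hamin _ hlastT hclast)
    refine ⟨hnd', htf', (Avl_append l' c).mp hav |>.1, ?_, ?_⟩
    · intro t
      rw [Finset.mem_erase]
      constructor
      · intro ht
        refine ⟨?_, (htop t).mp ((ITop_append l' c t).mpr (Or.inl ht))⟩
        intro hh
        subst hh
        exact last_not_top hnd' h0 (hlasta ▸ ht)
      · rintro ⟨hta2, ht⟩
        rcases (ITop_append l' c t).mp ((htop t).mpr ht) with h | ⟨-, h2, -⟩
        · exact h
        · exact absurd (h2 ▸ hlasta) hta2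
    · intro b
      rw [Finset.mem_erase]
      constructor
      · intro hb
        exact ⟨fun hh => hcl' (by rw [hcdef, ← hh]; exact IBot_mem hb),
          (hbot b).mp ((IBot_append l' c b).mpr (Or.inl hb))⟩
      · rintro ⟨hbc, hb⟩
        rcases (IBot_append l' c b).mp ((hbot b).mpr hb) with h | ⟨-, h2, -⟩
        · exact h
        · exact absurd h2 hbc
  · rintro ⟨hnd', htf', hav', htop', hbot'⟩
    have hcl' : c ∉ l' := fun hmem => by
      have := htf' ▸ List.mem_toFinset.mpr hmem
      exact (Finset.mem_erase.mp this).1 rfl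
    have hnd : (l' ++ [c]).Nodup := by
      rw [List.nodup_append']
      exact ⟨hnd', List.nodup_singleton c, fun x hx hy => by
        simp at hy; subst hy; exact hcl' hx⟩
    have htf : (l' ++ [c]).toFinset = S := by
      rw [List.toFinset_append, htf']
      simp only [List.toFinset_cons, List.toFinset_nil, insert_empty_eq]
      exact union_singleton_finset hcS
    have hal' : a ∈ l' := by
      rw [← List.mem_toFinset, htf', Finset.mem_erase]
      exact ⟨by omega, hTS haT⟩
    have h0 : l'.length ≠ 0 := by
      intro hh
      rw [List.length_eq_zero_iff.mp hh] at hal'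
      simp at hal'
    have hlasta : gE l' (l'.length - 1) = a := by
      have hge : a ≤ gE l' (l'.length - 1) := by
        apply last_max hnd' hav' hal'
        intro htop2
        have := (htop' a).mp htop2
        rw [Finset.mem_erase] at this
        exact this.1 rfl
      by_contra hcon
      have hlt : a < gE l' (l'.length - 1) := by omega
      have hlastT : gE l' (l'.length - 1) ∉ T := by
        intro hh
        have h2 : gE l' (l'.length - 1) ∈ T.erase a :=
          Finset.mem_erase.mpr ⟨by omega, hh⟩
        exact last_not_top hnd' h0 ((htop' _).mpr h2)
      have hmem : gE l' (l'.length - 1) ∈ S := by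
        have := htf' ▸ List.mem_toFinset.mpr (gE_mem (show l'.length - 1 < l'.length by omega))
        exact Finset.mem_of_mem_erase this
      have := hmax _ hmem hlastT
      omega
    refine ⟨hnd, htf, ?_, ?_, ?_⟩
    · rw [Avl_append]
      refine ⟨hav', ?_⟩
      rintro i j hij hj ⟨h1, h2⟩
      have hune : gE l' i ≠ a := by
        intro hh
        have := gE_inj hnd' (by omega) (by omega : l'.length - 1 < l'.length)
          (hh.trans hlasta.symm)
        omega
      have huS : gE l' i ∈ S := by
        have := htf' ▸ List.mem_toFinset.mpr (gE_mem (show i < l'.length by omega))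
        exact Finset.mem_of_mem_erase this
      have huT : gE l' i ∈ T := by
        by_contra hcon2
        have := hmax _ huS hcon2
        omega
      have hua : a < gE l' i := lt_of_le_of_ne (hamin _ huT h1) (Ne.symm hune)
      refine no_ascent_tops hnd' hav' hij hj h2 (fun w hw hw1 hw2 => ?_)
      have hwS : w ∈ S := by
        have := htf' ▸ List.mem_toFinset.mpr hw
        exact Finset.mem_of_mem_erase this
      have hwT : w ∈ T := by
        by_contra hwT
        have := hmax w hwS hwT
        omega
      exact (htop' w).mpr (Finset.mem_erase.mpr ⟨by omega, hwT⟩)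
    · intro t
      rw [ITop_append]
      constructor
      · rintro (h | ⟨-, h2, -⟩)
        · exact Finset.mem_of_mem_erase ((htop' t).mp h)
        · rw [← h2, hlasta]; exact haT
      · intro ht
        rcases eq_or_ne t a with rfl | hne2
        · exact Or.inr ⟨h0, hlasta, hac⟩
        · exact Or.inl ((htop' t).mpr (Finset.mem_erase.mpr ⟨hne2, ht⟩))
    · intro b
      rw [IBot_append]
      constructor
      · rintro (h | ⟨-, h2, -⟩)
        · exact Finset.mem_of_mem_erase ((hbot' b).mp h)
        · exact h2 ▸ hcB
      · intro hb
        rcases eq_or_ne b c with rfl | hne2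
        · exact Or.inr ⟨h0, rfl, hlasta ▸ hac⟩
        · exact Or.inl ((hbot' b).mpr (Finset.mem_erase.mpr ⟨hne2, hb⟩))

lemma filter_erase' (s : Finset ℕ) (p : ℕ → Prop) [DecidablePred p] (a : ℕ) :
    (s.erase a).filter p = (s.filter p).erase a := by
  ext x; simp only [Finset.mem_filter, Finset.mem_erase]; tauto

def Cond (T B : Finset ℕ) : Prop :=
  T.card = B.card ∧
    ∀ x, (B.filter (fun b => x ≤ b)).card ≤ (T.filter (fun t => x < t)).card

lemma sdiff_ne {S T B : Finset ℕ} (hS : S.card ≠ 0) (hTS : T ⊆ S) (hBS : B ⊆ S)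
    (hc : Cond T B) : (S \ T).Nonempty := by
  rw [Finset.sdiff_nonempty]
  intro hST
  have hT : T = S := le_antisymm hTS hST
  have hB : B = S := Finset.eq_of_subset_of_card_le hBS (by rw [← hc.1, hT])
  have hSne : S.Nonempty := Finset.card_pos.mp (by omega)
  set M := S.max' hSne with hM
  have h1 : M ∈ B.filter (fun b => M ≤ b) := by
    rw [hB, Finset.mem_filter]
    exact ⟨S.max'_mem hSne, le_rfl⟩
  have h2 : T.filter (fun t => M < t) = ∅ := by
    rw [hT, Finset.filter_eq_empty_iff]
    intro t ht
    exact not_lt.mpr (S.le_max' t ht)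
  have := hc.2 M
  rw [h2] at this
  simp at this
  exact absurd (this (Finset.mem_filter.mp h1).1) (lt_irrefl M)

lemma condB {T B : Finset ℕ} (hc : Cond T B) {c : ℕ} (hcB : c ∈ B)
    (hta : (T.filter (fun t => c < t)).Nonempty) :
    Cond (T.erase ((T.filter (fun t => c < t)).min' hta)) (B.erase c) := by
  set a := (T.filter (fun t => c < t)).min' hta with hadef
  have haT : a ∈ T := (Finset.mem_filter.mp (Finset.min'_mem _ hta)).1
  have hac : c < a := (Finset.mem_filter.mp (Finset.min'_mem _ hta)).2
  have hamin : ∀ t ∈ T, c < t → a ≤ t := fun t ht hct =>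
    Finset.min'_le _ t (Finset.mem_filter.mpr ⟨ht, hct⟩)
  constructor
  · rw [Finset.card_erase_of_mem haT, Finset.card_erase_of_mem hcB, hc.1]
  · intro x
    rw [filter_erase', filter_erase']
    rcases le_or_gt x c with hx | hx
    · -- x ≤ c : both erase a member
      have hcmem : c ∈ B.filter (fun b => x ≤ b) := Finset.mem_filter.mpr ⟨hcB, hx⟩
      have hamem : a ∈ T.filter (fun t => x < t) :=
        Finset.mem_filter.mpr ⟨haT, by omega⟩
      rw [Finset.card_erase_of_mem hcmem, Finset.card_erase_of_mem hamem]
      have := hc.2 x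
      have h1 : 1 ≤ (B.filter (fun b => x ≤ b)).card := Finset.card_pos.mpr ⟨c, hcmem⟩
      omega
    · -- c < x
      have hcer : (B.filter (fun b => x ≤ b)).erase c = B.filter (fun b => x ≤ b) := by
        apply Finset.erase_eq_of_notMem
        rw [Finset.mem_filter]
        rintro ⟨-, hh⟩; omega
      rw [hcer]
      rcases le_or_gt a x with hax | hax
      · have haer : (T.filter (fun t => x < t)).erase a = T.filter (fun t => x < t) := by
          apply Finset.erase_eq_of_notMem
          rw [Finset.mem_filter]
          rintro ⟨-, hh⟩; omega
        rw [haer]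
        exact hc.2 x
      · -- c < x < a
        have hamem : a ∈ T.filter (fun t => x < t) := Finset.mem_filter.mpr ⟨haT, hax⟩
        rw [Finset.card_erase_of_mem hamem]
        have hsub : B.filter (fun b => x ≤ b) ⊆ (B.filter (fun b => c ≤ b)).erase c := by
          intro b hb
          rw [Finset.mem_filter] at hb
          rw [Finset.mem_erase, Finset.mem_filter]
          exact ⟨by omega, hb.1, by omega⟩
        have h1 : (B.filter (fun b => x ≤ b)).card ≤
            (B.filter (fun b => c ≤ b)).card - 1 := by
          have := Finset.card_le_card hsub
          rw [Finset.card_erase_of_mem (Finset.mem_filter.mpr ⟨hcB, le_rfl⟩)] at this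
          exact this
        have h2 := hc.2 c
        have h3 : T.filter (fun t => c < t) = T.filter (fun t => x < t) := by
          ext t
          rw [Finset.mem_filter, Finset.mem_filter]
          constructor
          · rintro ⟨ht, hct⟩
            exact ⟨ht, by have := hamin t ht hct; omega⟩
          · rintro ⟨ht, hxt⟩
            exact ⟨ht, by omega⟩
        rw [h3] at h2
        omega

theorem key : ∀ N (S T B : Finset ℕ), S.card = N → T ⊆ S → B ⊆ S → Cond T B →
    ∃! l, Sol S T B l := by
  intro N
  induction N with
  | zero =>
    intro S T B hS hTS hBS hc
    have hSe : S = ∅ := Finset.card_eq_zero.mp hS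
    subst hSe
    have hT : T = ∅ := Finset.subset_empty.mp hTS
    have hB : B = ∅ := Finset.subset_empty.mp hBS
    subst hT; subst hB
    refine ⟨[], ⟨List.nodup_nil, by simp, ?_, ?_, ?_⟩, ?_⟩
    · intro i j k hij hjk hk; simp at hk
    · intro t
      simp only [Finset.notMem_empty, iff_false]
      rintro ⟨i, hi, -, -⟩; simp at hi
    · intro b
      simp only [Finset.notMem_empty, iff_false]
      rintro ⟨i, hi, -, -⟩; simp at hi
    · rintro m ⟨-, htf, -, -, -⟩
      exact List.toFinset_eq_empty_iff m |>.mp htf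
  | succ N IH =>
    intro S T B hS hTS hBS hc
    have hne : (S \ T).Nonempty := sdiff_ne (by omega) hTS hBS hc
    set c := (S \ T).max' hne with hcdef
    have hcS : c ∈ S := (Finset.mem_sdiff.mp (Finset.max'_mem _ hne)).1
    have hcT : c ∉ T := (Finset.mem_sdiff.mp (Finset.max'_mem _ hne)).2
    have hS' : (S.erase c).card = N := by
      rw [Finset.card_erase_of_mem hcS, hS]
      omega
    by_cases hcB : c ∈ B
    · -- case B
      have hta : (T.filter (fun t => c < t)).Nonempty := by
        rw [← Finset.card_pos]
        have := hc.2 c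
        have h1 : 1 ≤ (B.filter (fun b => c ≤ b)).card :=
          Finset.card_pos.mpr ⟨c, Finset.mem_filter.mpr ⟨hcB, le_rfl⟩⟩
        omega
      set a := (T.filter (fun t => c < t)).min' hta with hadef
      have haT : a ∈ T := (Finset.mem_filter.mp (Finset.min'_mem _ hta)).1
      obtain ⟨l', hl', hluniq⟩ := IH (S.erase c) (T.erase a) (B.erase c) hS'
        (fun x hx => Finset.mem_erase.mpr
          ⟨fun hh => hcT (hh ▸ (Finset.mem_of_mem_erase hx)), hTS (Finset.mem_of_mem_erase hx)⟩)
        (fun x hx => Finset.mem_erase.mpr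
          ⟨(Finset.mem_erase.mp hx).1, hBS (Finset.mem_of_mem_erase hx)⟩)
        (condB hc hcB hta)
      refine ⟨l' ++ [c], (solB hTS hne hcB hta l').mpr hl', ?_⟩
      intro m hm
      have hm0 : m.length ≠ 0 := by rw [sol_length hm, hS]; omega
      have hlast := sol_last_eq hm hne hm0
      have hdec := decomp_self hm0
      rw [hlast] at hdec
      have hm2 : Sol S T B (m.dropLast ++ [c]) := by rw [hdec]; exact hm
      have := hluniq _ ((solB hTS hne hcB hta m.dropLast).mp hm2)
      rw [← hdec, this]
    · -- case A
      obtain ⟨l', hl', hluniq⟩ := IH (S.erase c) T B hS'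
        (fun x hx => Finset.mem_erase.mpr ⟨fun hh => hcT (hh ▸ hx), hTS hx⟩)
        (fun x hx => Finset.mem_erase.mpr ⟨fun hh => hcB (hh ▸ hx), hBS hx⟩)
        hc
      refine ⟨l' ++ [c], (solA hne hcB l').mpr hl', ?_⟩
      intro m hm
      have hm0 : m.length ≠ 0 := by rw [sol_length hm, hS]; omega
      have hlast := sol_last_eq hm hne hm0
      have hdec := decomp_self hm0
      rw [hlast] at hdec
      have hm2 : Sol S T B (m.dropLast ++ [c]) := by rw [hdec]; exact hm
      have := hluniq _ ((solA hne hcB m.dropLast).mp hm2)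
      rw [← hdec, this]






noncomputable section

def Lp {n : ℕ} (σ : Equiv.Perm (Fin n)) : List ℕ :=
  List.ofFn (fun i : Fin n => (σ i : ℕ) + 1)

lemma Lp_length {n : ℕ} (σ : Equiv.Perm (Fin n)) : (Lp σ).length = n := by
  simp [Lp]

lemma gE_Lp {n : ℕ} (σ : Equiv.Perm (Fin n)) {i : ℕ} (h : i < n) :
    gE (Lp σ) i = (σ ⟨i, h⟩ : ℕ) + 1 := by
  rw [gE_pos_lt (by simp [Lp_length, h])]
  simp [Lp]

lemma entry_eq_gE {n : ℕ} (σ : Equiv.Perm (Fin n)) {i : ℕ} (h1 : 1 ≤ i) (h2 : i ≤ n) :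
    entry σ i = gE (Lp σ) (i - 1) := by
  rw [entry, dif_pos (by omega : i - 1 < n), gE_Lp σ (by omega : i - 1 < n)]

lemma Lp_nodup {n : ℕ} (σ : Equiv.Perm (Fin n)) : (Lp σ).Nodup := by
  rw [Lp, List.nodup_ofFn]
  intro i j hij
  simp only at hij
  exact σ.injective (Fin.val_injective (by omega))

lemma Lp_toFinset {n : ℕ} (σ : Equiv.Perm (Fin n)) :
    (Lp σ).toFinset = Finset.Icc 1 n := by
  ext v
  rw [List.mem_toFinset, Lp, List.mem_ofFn, Finset.mem_Icc]
  constructor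
  · rintro ⟨i, rfl⟩
    have := (σ i).isLt
    beta_reduce
    refine ⟨by omega, by omega⟩
  · rintro ⟨h1, h2⟩
    refine ⟨σ.symm ⟨v - 1, by omega⟩, ?_⟩
    beta_reduce
    rw [Equiv.apply_symm_apply]
    show v - 1 + 1 = v
    omega

lemma destop_iff {n : ℕ} (σ : Equiv.Perm (Fin n)) (t : ℕ) :
    t ∈ Destop σ ↔ ITop (Lp σ) t := by
  rw [Destop, Des, Finset.mem_image]
  constructor
  · rintro ⟨i, hi, rfl⟩
    rw [Finset.mem_filter, Finset.mem_Icc] at hi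
    obtain ⟨⟨h1, h2⟩, h3⟩ := hi
    refine ⟨i - 1, by rw [Lp_length]; omega, ?_, ?_⟩
    · rw [← entry_eq_gE σ h1 (by omega)]
    · rw [show i - 1 + 1 = (i + 1) - 1 by omega, ← entry_eq_gE σ (by omega) (by omega)]
      exact h3
  · rintro ⟨j, hj, he, hlt⟩
    rw [Lp_length] at hj
    refine ⟨j + 1, ?_, ?_⟩
    · rw [Finset.mem_filter, Finset.mem_Icc]
      refine ⟨⟨by omega, by omega⟩, ?_⟩
      rw [entry_eq_gE σ (by omega) (by omega), entry_eq_gE σ (by omega) (by omega)]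
      simp only [Nat.add_sub_cancel]
      rw [he]; exact hlt
    · rw [entry_eq_gE σ (by omega) (by omega)]
      simp only [Nat.add_sub_cancel]
      exact he

lemma desbot_iff {n : ℕ} (σ : Equiv.Perm (Fin n)) (b : ℕ) :
    b ∈ Desbot σ ↔ IBot (Lp σ) b := by
  rw [Desbot, Des, Finset.mem_image]
  constructor
  · rintro ⟨i, hi, rfl⟩
    rw [Finset.mem_filter, Finset.mem_Icc] at hi
    obtain ⟨⟨h1, h2⟩, h3⟩ := hi
    refine ⟨i - 1, by rw [Lp_length]; omega, ?_, ?_⟩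
    · rw [show i - 1 + 1 = (i + 1) - 1 by omega, ← entry_eq_gE σ (by omega) (by omega)]
    · rw [← entry_eq_gE σ h1 (by omega)]
      exact h3
  · rintro ⟨j, hj, he, hlt⟩
    rw [Lp_length] at hj
    refine ⟨j + 1, ?_, ?_⟩
    · rw [Finset.mem_filter, Finset.mem_Icc]
      refine ⟨⟨by omega, by omega⟩, ?_⟩
      rw [entry_eq_gE σ (by omega) (by omega), entry_eq_gE σ (by omega) (by omega)]
      simp only [Nat.add_sub_cancel]
      rw [he]; exact hlt
    · rw [entry_eq_gE σ (by omega) (by omega)]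
      rw [show j + 1 + 1 - 1 = j + 1 by omega]
      exact he

lemma contains_iff {n : ℕ} (σ : Equiv.Perm (Fin n)) :
    Contains (![1, 2, 0] : Fin 3 → Fin 3) σ ↔
      ∃ i j k : Fin n, i < j ∧ j < k ∧ σ k < σ i ∧ σ i < σ j := by
  constructor
  · rintro ⟨f, hf, hiff⟩
    refine ⟨f 0, f 1, f 2, hf (by decide), hf (by decide), ?_, ?_⟩
    · exact (hiff 2 0).mp (by decide)
    · exact (hiff 0 1).mp (by decide)
  · rintro ⟨i, j, k, hij, hjk, h1, h2⟩
    refine ⟨![i, j, k], ?_, ?_⟩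
    · intro a b hab
      fin_cases a <;> fin_cases b <;>
        simp_all [Matrix.cons_val_zero, Matrix.cons_val_one] <;>
        first
          | exact hij
          | exact hjk
          | exact lt_trans hij hjk
          | exact absurd hab (by decide)
    · intro a b
      have h3 : σ k < σ j := lt_trans h1 h2
      fin_cases a <;> fin_cases b <;>
        simp_all [Matrix.cons_val_zero, Matrix.cons_val_one] <;>
        omega

lemma avoids_iff {n : ℕ} (σ : Equiv.Perm (Fin n)) :
    AvoidsPat (![1, 2, 0] : Fin 3 → Fin 3) σ ↔ Avl (Lp σ) := by
  rw [AvoidsPat, contains_iff]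
  constructor
  · intro h i j k hij hjk hk ⟨h1, h2⟩
    rw [Lp_length] at hk
    rw [gE_Lp σ hk, gE_Lp σ (by omega : i < n)] at h1
    rw [gE_Lp σ (by omega : i < n), gE_Lp σ (by omega : j < n)] at h2
    exact h ⟨⟨i, by omega⟩, ⟨j, by omega⟩, ⟨k, hk⟩, by simp [Fin.lt_def]; omega,
      by simp [Fin.lt_def]; omega, by simpa using (by omega : (σ ⟨k, hk⟩ : ℕ) < σ ⟨i, by omega⟩),
      by simpa using (by omega : (σ ⟨i, by omega⟩ : ℕ) < σ ⟨j, by omega⟩)⟩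
  · rintro h ⟨i, j, k, hij, hjk, h1, h2⟩
    refine h i j k hij hjk (by rw [Lp_length]; exact k.isLt) ⟨?_, ?_⟩
    · rw [gE_Lp σ i.isLt, gE_Lp σ k.isLt]
      simp only [Fin.eta]
      have : (σ k : ℕ) < σ i := h1
      omega
    · rw [gE_Lp σ i.isLt, gE_Lp σ j.isLt]
      simp only [Fin.eta]
      have : (σ i : ℕ) < σ j := h2
      omega

end

lemma Lp_inj {n : ℕ} {σ τ : Equiv.Perm (Fin n)} (h : Lp σ = Lp τ) : σ = τ := by
  apply Equiv.ext
  intro i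
  have h2 : gE (Lp σ) (i : ℕ) = gE (Lp τ) (i : ℕ) := by rw [h]
  rw [gE_Lp σ i.isLt, gE_Lp τ i.isLt] at h2
  simp only [Fin.eta] at h2
  exact Fin.val_injective (by omega)

lemma perm_of_list {n : ℕ} {l : List ℕ} (hnd : l.Nodup)
    (htf : l.toFinset = Finset.Icc 1 n) : ∃ σ : Equiv.Perm (Fin n), Lp σ = l := by
  have hlen : l.length = n := by
    rw [← List.toFinset_card_of_nodup hnd, htf, Nat.card_Icc]
    omega
  have hbound : ∀ i : Fin n, 1 ≤ l[(i : ℕ)]'(by omega) ∧ l[(i : ℕ)]'(by omega) ≤ n := by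
    intro i
    have hm : l[(i : ℕ)]'(by omega) ∈ l := List.getElem_mem _
    have := htf ▸ List.mem_toFinset.mpr hm
    exact Finset.mem_Icc.mp this
  set f : Fin n → Fin n := fun i => ⟨l[(i : ℕ)]'(by omega) - 1, by
    have := hbound i; omega⟩ with hf
  have hinj : Function.Injective f := by
    intro i j hij
    rw [hf] at hij
    simp only [Fin.mk.injEq] at hij
    have hi := hbound i
    have hj := hbound j
    have : l[(i : ℕ)]'(by omega) = l[(j : ℕ)]'(by omega) := by omega
    have := (List.Nodup.getElem_inj_iff hnd).mp this
    exact Fin.val_injective this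
  have hbij : Function.Bijective f := Finite.injective_iff_bijective.mp hinj
  refine ⟨Equiv.ofBijective f hbij, ?_⟩
  apply List.ext_getElem (by simp [Lp_length, hlen])
  intro i h1 h2
  rw [Lp_length] at h1
  have : gE (Lp (Equiv.ofBijective f hbij)) i = l[i] := by
    rw [gE_Lp _ h1]
    have h3 : (Equiv.ofBijective f hbij) ⟨i, h1⟩ = f ⟨i, h1⟩ := rfl
    rw [h3, hf]
    have h4 := hbound ⟨i, h1⟩
    simp only [Fin.val_mk] at h4 ⊢
    omega
  rw [← this, gE_pos_lt (by rw [Lp_length]; exact h1)]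

lemma card_filter_sort (s : Finset ℕ) (p : ℕ → Prop) [DecidablePred p] :
    (s.filter p).card =
      ((Finset.range s.card).filter (fun i => p ((s.sort (· ≤ ·)).getD i 0))).card := by
  symm
  apply Finset.card_bij (fun i _ => (s.sort (· ≤ ·)).getD i 0)
  · intro i hi
    rw [Finset.mem_filter, Finset.mem_range] at hi
    obtain ⟨h1, h2⟩ := hi
    have hlen : i < (s.sort (· ≤ ·)).length := by rw [Finset.length_sort]; exact h1
    rw [Finset.mem_filter]
    refine ⟨?_, h2⟩
    rw [List.getD_eq_getElem _ _ hlen]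
    exact (Finset.mem_sort _).mp (List.getElem_mem hlen)
  · intro i hi j hj hij
    rw [Finset.mem_filter, Finset.mem_range] at hi hj
    have hli : i < (s.sort (· ≤ ·)).length := by rw [Finset.length_sort]; exact hi.1
    have hlj : j < (s.sort (· ≤ ·)).length := by rw [Finset.length_sort]; exact hj.1
    rw [List.getD_eq_getElem _ _ hli, List.getD_eq_getElem _ _ hlj] at hij
    exact (List.Nodup.getElem_inj_iff (s.sort_nodup (· ≤ ·))).mp hij
  · intro b hb
    rw [Finset.mem_filter] at hb
    have : b ∈ s.sort (· ≤ ·) := (Finset.mem_sort _).mpr hb.1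
    obtain ⟨i, hi, he⟩ := List.mem_iff_getElem.mp this
    refine ⟨i, ?_, ?_⟩
    · rw [Finset.mem_filter, Finset.mem_range]
      rw [Finset.length_sort] at hi
      refine ⟨hi, ?_⟩
      rw [List.getD_eq_getElem _ _ (by rw [Finset.length_sort]; exact hi), he]
      exact hb.2
    · rw [List.getD_eq_getElem _ _ hi, he]

lemma cond_of_dm {T B : Finset ℕ} (h : DescentMatching T B) : Cond T B := by
  obtain ⟨hcard, hT, hB, hlt⟩ := h
  refine ⟨hcard, fun x => ?_⟩
  rw [card_filter_sort B _, card_filter_sort T _]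
  apply Finset.card_le_card
  intro i hi
  rw [Finset.mem_filter, Finset.mem_range] at hi ⊢
  obtain ⟨h1, h2⟩ := hi
  have h3 := hlt i (by omega)
  exact ⟨by omega, by omega⟩

lemma dm_b_lt {T B : Finset ℕ} (h : DescentMatching T B) {b : ℕ} (hb : b ∈ B) :
    ∃ t ∈ T, b < t := by
  obtain ⟨hcard, hT, hBp, hlt⟩ := h
  have : b ∈ B.sort (· ≤ ·) := (Finset.mem_sort _).mpr hb
  obtain ⟨i, hi, he⟩ := List.mem_iff_getElem.mp this
  rw [Finset.length_sort] at hi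
  have h3 := hlt i (by omega)
  have hgd : (B.sort (· ≤ ·)).getD i 0 = b := by
    rw [List.getD_eq_getElem _ _ (by rw [Finset.length_sort]; omega), he]
  refine ⟨(T.sort (· ≤ ·)).getD i 0, ?_, by omega⟩
  have hi2 : i < (T.sort (· ≤ ·)).length := by rw [Finset.length_sort]; omega
  rw [List.getD_eq_getElem _ _ hi2]
  exact (Finset.mem_sort _).mp (List.getElem_mem hi2)


/-- For any descent matching `(T, B)` and any `n ≥ max T` (arbitrary `n ≥ 0`
if `T = ∅`), there is a unique `π ∈ Av_n(231)` with `Destop π = T` and `Desbot π = B`. -/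
theorem exists_unique_av231_of_descentMatching (T B : Finset ℕ) (h : DescentMatching T B)
    (n : ℕ) (hn : ∀ t ∈ T, t ≤ n) :
    ∃! π : Equiv.Perm (Fin n),
      AvoidsPat (![1, 2, 0] : Fin 3 → Fin 3) π ∧ Destop π = T ∧ Desbot π = B := by
  have hcond : Cond T B := cond_of_dm h
  have hTsub : T ⊆ Finset.Icc 1 n := fun t ht =>
    Finset.mem_Icc.mpr ⟨h.2.1 t ht, hn t ht⟩
  have hBsub : B ⊆ Finset.Icc 1 n := by
    intro b hb
    obtain ⟨t, ht, hbt⟩ := dm_b_lt h hb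
    exact Finset.mem_Icc.mpr ⟨h.2.2.1 b hb, by have := hn t ht; omega⟩
  obtain ⟨l, hl, hluniq⟩ := key n (Finset.Icc 1 n) T B (by rw [Nat.card_Icc]; omega)
    hTsub hBsub hcond
  obtain ⟨π, hπ⟩ := perm_of_list hl.1 hl.2.1
  subst hπ
  refine ⟨π, ⟨?_, ?_, ?_⟩, ?_⟩
  · exact (avoids_iff π).mpr hl.2.2.1
  · ext t
    rw [destop_iff]
    exact hl.2.2.2.1 t
  · ext b
    rw [desbot_iff]
    exact hl.2.2.2.2 b
  · rintro τ ⟨hav, hdt, hdb⟩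
    have hsol : Sol (Finset.Icc 1 n) T B (Lp τ) := by
      refine ⟨Lp_nodup τ, Lp_toFinset τ, (avoids_iff τ).mp hav, ?_, ?_⟩
      · intro t
        rw [← destop_iff, hdt]
      · intro b
        rw [← desbot_iff, hdb]
    exact Lp_inj (hluniq _ hsol)
end

section
/- Let T and B be finite sets of positive integers with |T| = |B|. Then (T, B) is a descent matching if and only if for every integer n with n ≥ max(T) (n ≥ 0 arbitrary when T is empty) there exists a permutation σ ∈ S_n such that Destop(σ) = T and Desbot(σ) = B. -/
open scoped Classical

/-!
Both directions go through the counting form of the matching condition: with `T` and `B` sorted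
increasingly, `b_i < t_i` for all `i` iff for every `x` there are at least as many `t ∈ T` with
`x < t` as `b ∈ B` with `x ≤ b`. A permutation satisfies this because each descent bottom
`≥ x` sits right after its own descent top `> x`, and distinct descents have distinct tops.
Conversely, the one-line word is built by induction on `n`. If `n ∉ T`, append `n` to a word for
`(T, B)` in `S_{n-1}`. If `n ∈ T`, take a word for `(T \ {n}, B \ {max B})` and insert `n`
right before `max B`: the entry preceding `max B` is smaller, since `max B` is not a descent
bottom there, so the only change is the new descent `(n, max B)`.
-/

open Finset

section Descents

variable {α : Type*} [LinearOrder α]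

def descents (l : List α) : Finset (α × α) :=
  ((l.zip l.tail).filter fun p => p.2 < p.1).toFinset

@[simp] theorem descents_nil : descents ([] : List α) = ∅ := rfl

@[simp] theorem descents_singleton (a : α) : descents [a] = ∅ := rfl

theorem descents_cons_cons (a b : α) (l : List α) :
    descents (a :: b :: l) =
      if b < a then insert (a, b) (descents (b :: l)) else descents (b :: l) := by
  by_cases h : b < a <;> simp [descents, h]

theorem mem_descents {l : List α} {p : α × α} :
    p ∈ descents l ↔ p.2 < p.1 ∧ ∃ i, ∃ h : i + 1 < l.length, (l[i], l[i + 1]) = p := by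
  simp only [descents, List.mem_toFinset, List.mem_filter, decide_eq_true_eq]
  rw [List.mem_iff_getElem]
  simp only [List.getElem_zip, List.getElem_tail, List.length_zip, List.length_tail]
  constructor
  · rintro ⟨⟨i, hi, rfl⟩, hlt⟩
    exact ⟨hlt, i, by omega, rfl⟩
  · rintro ⟨hlt, i, hi, rfl⟩
    exact ⟨⟨i, by omega, rfl⟩, hlt⟩

theorem descents_append_cons (u : List α) (a : α) (w : List α) :
    descents (u ++ a :: w) = descents (u ++ [a]) ∪ descents (a :: w) := by
  induction u with
  | nil => simp
  | cons x u ih =>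
    cases u with
    | nil => by_cases h : a < x <;> simp [descents_cons_cons, h]
    | cons y u =>
      simp only [List.cons_append] at ih ⊢
      rw [descents_cons_cons, descents_cons_cons x y, ih]
      split_ifs <;> simp [Finset.insert_union]

theorem descents_concat_of_lt {l : List α} {m : α} (hl : ∀ x ∈ l.getLast?, x < m) :
    descents (l ++ [m]) = descents l := by
  rcases List.eq_nil_or_concat' l with rfl | ⟨l, x, rfl⟩
  · simp
  · have hx : x < m := hl x (by simp)
    rw [List.append_assoc, List.singleton_append, descents_append_cons,
      descents_cons_cons, if_neg (not_lt.2 hx.le)]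
    simp

theorem mem_descents_append_cons_cons {u v : List α} {a b : α} (h : b < a) :
    (a, b) ∈ descents (u ++ a :: b :: v) := by
  rw [descents_append_cons, descents_cons_cons, if_pos h]
  exact mem_union_right _ (mem_insert_self _ _)

theorem getLast?_le_of_forall_notMem_descents {u v : List α} {b : α}
    (hb : ∀ a, (a, b) ∉ descents (u ++ b :: v)) :
    ∀ x ∈ u.getLast?, x ≤ b := by
  rcases List.eq_nil_or_concat' u with rfl | ⟨u, x, rfl⟩
  · simp
  · intro y hy
    obtain rfl : x = y := by simpa using hy
    by_contra! h
    have hxb := hb x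
    rw [List.append_assoc, List.singleton_append] at hxb
    exact hxb (mem_descents_append_cons_cons h)

theorem descents_append_cons_cons_eq_insert {u v : List α} {m b : α} (hbm : b < m)
    (hu : ∀ x ∈ u.getLast?, x ≤ b) :
    descents (u ++ m :: b :: v) = insert (m, b) (descents (u ++ b :: v)) := by
  rcases List.eq_nil_or_concat' u with rfl | ⟨u, x, rfl⟩
  · simp [descents_cons_cons, hbm]
  · have hx : x ≤ b := hu x (by simp)
    simp only [List.append_assoc, List.singleton_append]
    rw [descents_append_cons u x (m :: b :: v), descents_append_cons u x (b :: v),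
      descents_cons_cons x, descents_cons_cons x, descents_cons_cons m,
      if_neg (not_lt.2 (hx.trans hbm.le)), if_neg (not_lt.2 hx), if_pos hbm, union_insert]

theorem injOn_fst_descents {l : List α} (hl : l.Nodup) :
    Set.InjOn Prod.fst (descents l : Set (α × α)) := by
  rintro p hp q hq hpq
  obtain ⟨-, i, hi, rfl⟩ := mem_descents.1 hp
  obtain ⟨-, j, hj, rfl⟩ := mem_descents.1 hq
  obtain rfl : i = j := hl.getElem_inj_iff.1 hpq
  rfl

end Descents

def oneLine {n : ℕ} (σ : Equiv.Perm (Fin n)) : List ℕ :=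
  List.ofFn fun i => (σ i : ℕ) + 1

theorem oneLine_nodup {n : ℕ} (σ : Equiv.Perm (Fin n)) : (oneLine σ).Nodup :=
  List.nodup_ofFn.2 fun i j h => σ.injective (Fin.ext (by simpa using h))

theorem entry_succ {n : ℕ} (σ : Equiv.Perm (Fin n)) {j : ℕ} (hj : j < n) :
    entry σ (j + 1) = σ ⟨j, hj⟩ + 1 := by
  simp [entry, hj]

theorem descents_oneLine {n : ℕ} (σ : Equiv.Perm (Fin n)) :
    descents (oneLine σ) = (Des σ).image fun i => (entry σ i, entry σ (i + 1)) := by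
  ext p
  simp only [mem_descents, oneLine, List.length_ofFn, List.getElem_ofFn, Des, mem_image,
    mem_filter, mem_Icc]
  constructor
  · rintro ⟨hlt, j, hj, rfl⟩
    refine ⟨j + 1, ⟨⟨by omega, by omega⟩, ?_⟩, ?_⟩ <;>
      simp_all [entry_succ σ (show j < n by omega), entry_succ σ hj]
  · rintro ⟨i, ⟨⟨hi1, hin⟩, hlt⟩, rfl⟩
    obtain ⟨j, rfl⟩ : ∃ j, i = j + 1 := ⟨i - 1, by omega⟩
    rw [entry_succ σ (show j < n by omega), entry_succ σ (show j + 1 < n by omega)] at hlt ⊢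
    exact ⟨hlt, j, by omega, rfl⟩

theorem destop_eq_image_fst {n : ℕ} (σ : Equiv.Perm (Fin n)) :
    Destop σ = (descents (oneLine σ)).image Prod.fst := by
  rw [descents_oneLine, image_image]
  rfl

theorem desbot_eq_image_snd {n : ℕ} (σ : Equiv.Perm (Fin n)) :
    Desbot σ = (descents (oneLine σ)).image Prod.snd := by
  rw [descents_oneLine, image_image]
  rfl

theorem exists_oneLine_eq {n : ℕ} {l : List ℕ} (hl : l.Perm (List.range' 1 n)) :
    ∃ σ : Equiv.Perm (Fin n), oneLine σ = l := by
  have hlen : l.length = n := by simpa using hl.length_eq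
  have hmem : ∀ (i : ℕ) (hi : i < l.length), 1 ≤ l[i] ∧ l[i] < n + 1 := fun i hi => by
    simpa [add_comm] using hl.subset (List.getElem_mem hi)
  let f : Fin n → Fin n := fun i => ⟨l[(i : ℕ)] - 1, by have := hmem i (by omega); omega⟩
  have hf : Function.Injective f := fun i j hfij => by
    have h1 := hmem i (by omega)
    have h2 := hmem j (by omega)
    have hij : l[(i : ℕ)] = l[(j : ℕ)] := by simp [f, Fin.ext_iff] at hfij; omega
    exact Fin.ext ((hl.nodup_iff.2 (List.nodup_range' ..)).getElem_inj_iff.1 hij)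
  refine ⟨Equiv.ofBijective f (Finite.injective_iff_bijective.1 hf), ?_⟩
  refine List.ext_getElem (by simp [oneLine, hlen]) fun i h1 h2 => ?_
  have := hmem i h2
  simp only [oneLine, Equiv.ofBijective_apply, List.getElem_ofFn, f]
  omega

section Dominance

variable {α : Type*} [LinearOrder α]

def StrictlyDominates (T B : Finset α) : Prop :=
  ∀ x, #{b ∈ B | x ≤ b} ≤ #{t ∈ T | x < t}

theorem card_filter_eq_card_filter_orderEmbOfFin (s : Finset α) {k : ℕ} (h : #s = k)
    (p : α → Prop) [DecidablePred p] : #{a ∈ s | p a} = #{i | p (s.orderEmbOfFin h i)} := by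
  conv_lhs => rw [← map_orderEmbOfFin_univ s h]
  rw [filter_map, card_map]
  rfl

theorem forall_orderEmbOfFin_lt_iff {T B : Finset α} {k : ℕ} (hT : #T = k) (hB : #B = k) :
    (∀ i, B.orderEmbOfFin hB i < T.orderEmbOfFin hT i) ↔ StrictlyDominates T B := by
  set t := T.orderEmbOfFin hT
  set b := B.orderEmbOfFin hB
  have hcount : ∀ x, #{a ∈ B | x ≤ a} ≤ #{a ∈ T | x < a} ↔
      #{i | x ≤ b i} ≤ #{i | x < t i} := fun x => by
    rw [card_filter_eq_card_filter_orderEmbOfFin B hB,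
      card_filter_eq_card_filter_orderEmbOfFin T hT]
  simp only [StrictlyDominates, hcount]
  constructor
  · intro h x
    exact card_le_card fun i hi => mem_filter.2 ⟨mem_univ i, (mem_filter.1 hi).2.trans_lt (h i)⟩
  · intro h i
    -- If `t i ≤ b i`, all `b j` with `j ≥ i` are `≥ t i`, but only the `t j` with `j > i`
    -- exceed `t i`.
    by_contra! hi
    have hIci : Ici i ⊆ ({j | t i ≤ b j} : Finset (Fin k)) := fun j hj =>
      mem_filter.2 ⟨mem_univ j, hi.trans (b.monotone (mem_Ici.1 hj))⟩
    have hIoi : ({j | t i < t j} : Finset (Fin k)) = Ioi i := by ext j; simp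
    have := (card_le_card hIci).trans ((h (t i)).trans_eq (congrArg card hIoi))
    rw [Ici_eq_cons_Ioi, card_cons] at this
    omega

theorem descentMatching_iff {T B : Finset ℕ} :
    DescentMatching T B ↔
      #T = #B ∧ (∀ t ∈ T, 0 < t) ∧ (∀ b ∈ B, 0 < b) ∧ StrictlyDominates T B := by
  refine and_congr_right fun hcard => and_congr_right' (and_congr_right' ?_)
  rw [← forall_orderEmbOfFin_lt_iff rfl hcard.symm, Fin.forall_iff]
  refine forall₂_congr fun i hi => ?_
  rw [orderEmbOfFin_apply, orderEmbOfFin_apply,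
    List.getD_eq_getElem _ _ (by simpa [hcard] using hi),
    List.getD_eq_getElem _ _ (by simpa using hi)]
  exact Iff.rfl

theorem StrictlyDominates.exists_lt {T B : Finset α} (h : StrictlyDominates T B) {b : α}
    (hb : b ∈ B) : ∃ t ∈ T, b < t := by
  have hpos : 0 < #{t ∈ T | b < t} :=
    (card_pos.2 ⟨b, mem_filter.2 ⟨hb, le_rfl⟩⟩).trans_le (h b)
  exact filter_nonempty_iff.1 (card_pos.1 hpos)

theorem StrictlyDominates.erase {T B : Finset α} (h : StrictlyDominates T B) {m b : α}
    (hmT : m ∈ T) (hm : ∀ t ∈ T, t ≤ m) (hbB : b ∈ B) (hb : ∀ b' ∈ B, b' ≤ b) :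
    StrictlyDominates (T.erase m) (B.erase b) := by
  intro x
  by_cases hx : x ≤ b
  · obtain ⟨t, ht, hbt⟩ := h.exists_lt hbB
    rw [filter_erase, filter_erase, card_erase_of_mem (mem_filter.2 ⟨hbB, hx⟩),
      card_erase_of_mem (mem_filter.2 ⟨hmT, hx.trans_lt (hbt.trans_le (hm t ht))⟩)]
    exact Nat.sub_le_sub_right (h x) 1
  · have : {b' ∈ B.erase b | x ≤ b'} = ∅ := filter_eq_empty_iff.2 fun b' hb' =>
      not_le.2 ((hb b' (mem_of_mem_erase hb')).trans_lt (not_le.1 hx))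
    simp [this]

theorem strictlyDominates_image_fst_image_snd {D : Finset (α × α)} (hlt : ∀ p ∈ D, p.2 < p.1)
    (hinj : Set.InjOn Prod.fst (D : Set (α × α))) :
    StrictlyDominates (D.image Prod.fst) (D.image Prod.snd) := by
  intro x
  rw [filter_image, filter_image, card_image_of_injOn (hinj.mono (filter_subset _ _))]
  exact card_image_le.trans
    (card_le_card fun p hp => mem_filter.2
      ⟨(mem_filter.1 hp).1, (mem_filter.1 hp).2.trans_lt (hlt p (mem_filter.1 hp).1)⟩)

end Dominance

open List in
theorem exists_descents_eq_insert {n b : ℕ} {l : List ℕ} (hl : l.Perm (List.range' 1 n))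
    (hb1 : 1 ≤ b) (hbn : b ≤ n) (hbot : b ∉ (descents l).image Prod.snd) :
    ∃ l' : List ℕ, l'.Perm (List.range' 1 (n + 1)) ∧
      descents l' = insert (n + 1, b) (descents l) := by
  have hbl : b ∈ l := hl.mem_iff.2 (List.mem_range'_1.2 ⟨hb1, by omega⟩)
  obtain ⟨u, v, rfl⟩ := List.append_of_mem hbl
  have hu : ∀ x ∈ u.getLast?, x ≤ b :=
    getLast?_le_of_forall_notMem_descents fun a ha => hbot (mem_image_of_mem Prod.snd ha)
  refine ⟨u ++ (n + 1) :: b :: v, ?_, descents_append_cons_cons_eq_insert (by omega) hu⟩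
  calc u ++ (n + 1) :: b :: v ~ (n + 1) :: (u ++ b :: v) := List.perm_middle
    _ ~ (n + 1) :: List.range' 1 n := hl.cons _
    _ ~ List.range' 1 n ++ [n + 1] := (List.perm_append_singleton _ _).symm
    _ = List.range' 1 (n + 1) := by rw [List.range'_concat, add_comm, one_mul]

theorem exists_perm_range'_image_descents (n : ℕ) {T B : Finset ℕ} (hB : ∀ b ∈ B, 0 < b)
    (hcard : #T = #B) (hdom : StrictlyDominates T B) (hT : ∀ t ∈ T, t ≤ n) :
    ∃ l : List ℕ, l.Perm (List.range' 1 n) ∧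
      (descents l).image Prod.fst = T ∧ (descents l).image Prod.snd = B := by
  induction n generalizing T B with
  | zero =>
    have hB0 : B = ∅ := eq_empty_of_forall_notMem fun b hb => by
      obtain ⟨t, ht, hbt⟩ := hdom.exists_lt hb
      have := hT t ht
      omega
    have hT0 : T = ∅ := card_eq_zero.1 (by rw [hcard, hB0, card_empty])
    exact ⟨[], List.Perm.refl _, by simp [hT0], by simp [hB0]⟩
  | succ n ih =>
    by_cases hnT : n + 1 ∈ T
    · have hBne : B.Nonempty := card_pos.1 (hcard ▸ card_pos.2 ⟨_, hnT⟩)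
      have hbB := B.max'_mem hBne
      obtain ⟨t, ht, hbt⟩ := hdom.exists_lt hbB
      have hT' : ∀ t ∈ T.erase (n + 1), t ≤ n := fun t ht =>
        Nat.le_of_lt_succ ((hT t (mem_of_mem_erase ht)).lt_of_ne (ne_of_mem_erase ht))
      obtain ⟨l, hl, htop, hbot⟩ := ih (fun b hb => hB b (mem_of_mem_erase hb))
        (by rw [card_erase_of_mem hnT, card_erase_of_mem hbB, hcard])
        (hdom.erase hnT hT hbB (B.le_max' · )) hT'
      obtain ⟨l', hl', hdes⟩ := exists_descents_eq_insert hl (hB _ hbB)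
        (by have := hT t ht; omega) (by rw [hbot]; exact notMem_erase _ B)
      refine ⟨l', hl', ?_, ?_⟩
      · rw [hdes, image_insert, htop, insert_erase hnT]
      · rw [hdes, image_insert, hbot, insert_erase hbB]
    · obtain ⟨l, hl, htop, hbot⟩ := ih hB hcard hdom fun t ht =>
        Nat.le_of_lt_succ ((hT t ht).lt_of_ne (ne_of_mem_of_not_mem ht hnT))
      have hlast : ∀ x ∈ l.getLast?, x < n + 1 := fun x hx =>
        (List.mem_range'_1.1 (hl.subset (List.mem_of_getLast? hx))).2.trans_eq (add_comm _ _)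
      refine ⟨l ++ [n + 1], ?_, by rw [descents_concat_of_lt hlast, htop],
        by rw [descents_concat_of_lt hlast, hbot]⟩
      rw [List.range'_concat, add_comm 1, one_mul]
      exact hl.append_right _

/-- `(T, B)` is a descent matching iff for every `n ≥ max T` (arbitrary `n ≥ 0`
when `T = ∅`) there is a permutation `σ ∈ S_n` with `Destop σ = T` and `Desbot σ = B`. -/
theorem descentMatching_iff_exists_perm (T B : Finset ℕ)
    (hT : ∀ t ∈ T, 0 < t) (hB : ∀ b ∈ B, 0 < b) (hcard : T.card = B.card) :
    DescentMatching T B ↔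
      ∀ n : ℕ, (∀ t ∈ T, t ≤ n) →
        ∃ σ : Equiv.Perm (Fin n), Destop σ = T ∧ Desbot σ = B := by
  rw [descentMatching_iff]
  constructor
  · rintro ⟨-, -, -, hdom⟩ n hTn
    obtain ⟨l, hl, htop, hbot⟩ := exists_perm_range'_image_descents n hB hcard hdom hTn
    obtain ⟨σ, rfl⟩ := exists_oneLine_eq hl
    exact ⟨σ, by rw [destop_eq_image_fst, htop], by rw [desbot_eq_image_snd, hbot]⟩
  · intro h
    obtain ⟨σ, htop, hbot⟩ := h (T.sup id) fun t ht => le_sup (f := id) ht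
    refine ⟨hcard, hT, hB, ?_⟩
    rw [← htop, ← hbot, destop_eq_image_fst, desbot_eq_image_snd]
    exact strictlyDominates_image_fst_image_snd (fun p hp => (mem_descents.1 hp).1)
      (injOn_fst_descents (oneLine_nodup σ))
end

section
/- For every permutation σ ∈ Av_n(312), the complement of the descent bottom set equals the set of left-to-right maxima: [n] \ Desbot(σ) = LRmax(σ). -/
open scoped Classical

/-! A value that is not a descent bottom stands either first or at the top of an ascent
`σ(q) < σ(q+1)`. In a 312-avoider every entry before such an ascent is smaller than `σ(q+1)`,
since a larger one would form a 312 with `σ(q) σ(q+1)`; hence the value is a left-to-right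
maximum. Conversely a left-to-right maximum exceeds its predecessor, so it is never a descent bottom. -/

section Entry

variable {n : ℕ} (σ : Equiv.Perm (Fin n))

lemma entry_of_mem_Icc {i : ℕ} (hi : i ∈ Finset.Icc 1 n) :
    entry σ i = (σ ⟨i - 1, by grind⟩ : ℕ) + 1 := by
  rw [entry, dif_pos]

lemma entry_mem_Icc {i : ℕ} (hi : i ∈ Finset.Icc 1 n) : entry σ i ∈ Finset.Icc 1 n := by
  rw [entry_of_mem_Icc σ hi, Finset.mem_Icc]
  have := (σ ⟨i - 1, by grind⟩).isLt
  omega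

lemma entry_lt_entry_iff {i j : ℕ} (hi : i ∈ Finset.Icc 1 n) (hj : j ∈ Finset.Icc 1 n) :
    entry σ i < entry σ j ↔ σ ⟨i - 1, by grind⟩ < σ ⟨j - 1, by grind⟩ := by
  rw [entry_of_mem_Icc σ hi, entry_of_mem_Icc σ hj, Fin.lt_def, Nat.add_lt_add_iff_right]

lemma entry_injOn : Set.InjOn (entry σ) (Finset.Icc 1 n) := by
  intro i hi j hj hij
  rw [Finset.mem_coe] at hi hj
  rw [entry_of_mem_Icc σ hi, entry_of_mem_Icc σ hj, Nat.add_right_cancel_iff, Fin.val_inj,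
    σ.apply_eq_iff_eq, Fin.mk.injEq] at hij
  grind

lemma entry_ne_entry {i j : ℕ} (hi : i ∈ Finset.Icc 1 n) (hj : j ∈ Finset.Icc 1 n)
    (hij : i ≠ j) : entry σ i ≠ entry σ j :=
  (entry_injOn σ).ne hi hj hij

lemma exists_entry_eq {v : ℕ} (hv : v ∈ Finset.Icc 1 n) :
    ∃ p ∈ Finset.Icc 1 n, entry σ p = v := by
  have hpos : v - 1 < n := by grind
  set q := σ.symm ⟨v - 1, hpos⟩
  have hq : (q : ℕ) + 1 ∈ Finset.Icc 1 n := by grind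
  refine ⟨q + 1, hq, ?_⟩
  rw [entry_of_mem_Icc σ hq]
  simp only [Nat.add_sub_cancel, Fin.eta, q, Equiv.apply_symm_apply]
  grind

end Entry

lemma contains312_of_entry {n : ℕ} (σ : Equiv.Perm (Fin n)) {a b c : ℕ} (ha : 1 ≤ a)
    (hab : a < b) (hbc : b < c) (hc : c ≤ n) (hlow : entry σ b < entry σ c)
    (hhigh : entry σ c < entry σ a) : Contains (![2, 0, 1] : Fin 3 → Fin 3) σ := by
  have hA : a ∈ Finset.Icc 1 n := by grind
  have hB : b ∈ Finset.Icc 1 n := by grind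
  have hC : c ∈ Finset.Icc 1 n := by grind
  rw [entry_lt_entry_iff σ hB hC] at hlow
  rw [entry_lt_entry_iff σ hC hA] at hhigh
  refine ⟨![⟨a - 1, by grind⟩, ⟨b - 1, by grind⟩, ⟨c - 1, by grind⟩], ?_, ?_⟩
  · rw [Fin.strictMono_iff_lt_succ]
    intro i
    fin_cases i <;> simp [Fin.lt_def] <;> omega
  · have := hlow.trans hhigh
    intro i j
    fin_cases i <;> fin_cases j <;> simp [hlow, hhigh, this, hlow.le, hhigh.le, this.le]

section Descents

variable {n : ℕ} (σ : Equiv.Perm (Fin n))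

lemma mem_Desbot_iff {v : ℕ} :
    v ∈ Desbot σ ↔
      ∃ i ∈ Finset.Icc 1 (n - 1), entry σ (i + 1) < entry σ i ∧ entry σ (i + 1) = v := by
  simp only [Desbot, Des, Finset.mem_image, Finset.mem_filter, and_assoc]

lemma mem_LRmax_iff {v : ℕ} :
    v ∈ LRmax σ ↔ ∃ p ∈ Finset.Icc 1 n,
      (∀ j, 1 ≤ j → j < p → entry σ j < entry σ p) ∧ entry σ p = v := by
  simp only [LRmax, Finset.mem_image, Finset.mem_filter, and_assoc]

lemma entry_lt_entry_succ_of_notMem_Desbot {q : ℕ} (hq : 1 ≤ q) (hqn : q + 1 ≤ n)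
    (hnot : entry σ (q + 1) ∉ Desbot σ) : entry σ q < entry σ (q + 1) := by
  refine lt_of_le_of_ne (not_lt.1 fun hdes => hnot ?_)
    (entry_ne_entry σ (by simp; omega) (by simp; omega) (by omega))
  exact (mem_Desbot_iff σ).2 ⟨q, by simp; omega, hdes, rfl⟩

lemma LRmax_subset_Icc_sdiff_Desbot : LRmax σ ⊆ Finset.Icc 1 n \ Desbot σ := by
  intro v hv
  obtain ⟨p, hp, hmax, rfl⟩ := (mem_LRmax_iff σ).1 hv
  refine Finset.mem_sdiff.2 ⟨entry_mem_Icc σ hp, fun hdes => ?_⟩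
  obtain ⟨i, hi, hdes, heq⟩ := (mem_Desbot_iff σ).1 hdes
  rw [Finset.mem_Icc] at hi
  have hip : i + 1 = p := entry_injOn σ (by simp; omega) hp heq
  exact absurd (hmax i hi.1 (by omega)) (by rw [← hip]; exact hdes.not_gt)

end Descents

section Avoids312

variable {n : ℕ} {σ : Equiv.Perm (Fin n)}

lemma entry_lt_entry_succ_of_avoids312 (h : AvoidsPat (![2, 0, 1] : Fin 3 → Fin 3) σ)
    {j q : ℕ} (hj : 1 ≤ j) (hjq : j < q) (hqn : q + 1 ≤ n)
    (hasc : entry σ q < entry σ (q + 1)) : entry σ j < entry σ (q + 1) := by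
  refine lt_of_le_of_ne (not_lt.1 fun hgt => h ?_)
    (entry_ne_entry σ (by simp; omega) (by simp; omega) (by omega))
  exact contains312_of_entry σ hj hjq (by omega) hqn hasc hgt

lemma Icc_sdiff_Desbot_subset_LRmax_of_avoids312
    (h : AvoidsPat (![2, 0, 1] : Fin 3 → Fin 3) σ) :
    Finset.Icc 1 n \ Desbot σ ⊆ LRmax σ := by
  intro v hv
  obtain ⟨hv, hnot⟩ := Finset.mem_sdiff.1 hv
  obtain ⟨p, hp, rfl⟩ := exists_entry_eq σ hv
  refine (mem_LRmax_iff σ).2 ⟨p, hp, fun j hj hjp => ?_, rfl⟩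
  rw [Finset.mem_Icc] at hp
  obtain ⟨q, rfl⟩ : ∃ q, p = q + 1 := ⟨p - 1, by omega⟩
  have hasc := entry_lt_entry_succ_of_notMem_Desbot σ (by omega) hp.2 hnot
  rcases (Nat.lt_succ_iff.1 hjp).lt_or_eq with hjq | rfl
  · exact entry_lt_entry_succ_of_avoids312 h hj hjq hp.2 hasc
  · exact hasc

end Avoids312

/-- For `σ ∈ Av_n(312)`, `[n] \ Desbot σ = LRmax σ`. -/
theorem compl_desbot_eq_lrmax_of_avoids312 (n : ℕ) (σ : Equiv.Perm (Fin n))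
    (h : AvoidsPat (![2, 0, 1] : Fin 3 → Fin 3) σ) :
    Finset.Icc 1 n \ Desbot σ = LRmax σ :=
  (Icc_sdiff_Desbot_subset_LRmax_of_avoids312 h).antisymm (LRmax_subset_Icc_sdiff_Desbot σ)
end
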